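/- arXiv:1910.08923 — 3 statements merged into one kernel-verified Lean document; each statement's English description precedes it below -/
import Mathlib

section
/- Every periodic interval exchange transformation is a commutator in 𝒢: if g ∈ 𝒢 is periodic, then there exist a, b ∈ 𝒢 with g = a·b·a⁻¹·b⁻¹. -/
open scoped commutatorElement

/-- `f` is an interval exchange transformation (IET) of `[0,1)`, viewed as a permutation of `ℝ`
that fixes every point outside `[0,1)`: there is a finite subdivision
`0 = a 0 < a 1 < … < a (m+1) = 1` such that `f` is a translation on each half-open
interval `[a i, a (i+1))`. -/
def IsIET (f : Equiv.Perm ℝ) : Prop :=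
  (∀ x : ℝ, x ∉ Set.Ico (0 : ℝ) 1 → f x = x) ∧
  ∃ (m : ℕ) (a : Fin (m + 2) → ℝ),
    a 0 = 0 ∧ a (Fin.last (m + 1)) = 1 ∧ StrictMono a ∧
    ∀ i : Fin (m + 1), ∃ c : ℝ, ∀ x ∈ Set.Ico (a i.castSucc) (a i.succ), f x = x + c

/-- `f` is an interval exchange transformation with flips (FIET) of `[0,1)`, viewed as a
permutation of `ℝ` fixing every point outside `[0,1)`: there is a finite subdivision
`0 = a 0 < a 1 < … < a (m+1) = 1` such that on each open interval `(a i, a (i+1))`, `f` is an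
isometry, i.e. of the form `x ↦ x + c` or `x ↦ c - x`. -/
def IsFIET (f : Equiv.Perm ℝ) : Prop :=
  (∀ x : ℝ, x ∉ Set.Ico (0 : ℝ) 1 → f x = x) ∧
  ∃ (m : ℕ) (a : Fin (m + 2) → ℝ),
    a 0 = 0 ∧ a (Fin.last (m + 1)) = 1 ∧ StrictMono a ∧
    ∀ i : Fin (m + 1),
      (∃ c : ℝ, ∀ x ∈ Set.Ioo (a i.castSucc) (a i.succ), f x = x + c) ∨
      (∃ c : ℝ, ∀ x ∈ Set.Ioo (a i.castSucc) (a i.succ), f x = c - x)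

/-- Two permutations of `ℝ` agree outside a finite set; this is equality of the classes in the
quotient group `𝒢̄` of FIETs modulo maps that are the identity off a finite set. -/
def FEq (f g : Equiv.Perm ℝ) : Prop := {x : ℝ | f x ≠ g x}.Finite

/-- The set of commutators `⁅a, b⁆ = a * b * a⁻¹ * b⁻¹` of interval exchange
transformations. -/
def IETCommutators : Set (Equiv.Perm ℝ) :=
  {x | ∃ a b : Equiv.Perm ℝ, IsIET a ∧ IsIET b ∧ x = ⁅a, b⁆}

/-- The set of commutators `⁅a, b⁆ = a * b * a⁻¹ * b⁻¹` of interval exchange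
transformations with flips. -/
def FIETCommutators : Set (Equiv.Perm ℝ) :=
  {x | ∃ a b : Equiv.Perm ℝ, IsFIET a ∧ IsFIET b ∧ x = ⁅a, b⁆}

/-- `g` is a product of at most `n` commutators of elements of the group `𝒢` of interval
exchange transformations; i.e. the commutator length of `g` in `𝒢` is at most `n`. -/
def IsProdOfIETCommutators (n : ℕ) (g : Equiv.Perm ℝ) : Prop :=
  ∃ l : List (Equiv.Perm ℝ), l.length ≤ n ∧ (∀ x ∈ l, x ∈ IETCommutators) ∧ g = l.prod

/-- `f ∈ 𝒢_m`: `f` is an IET of `[0,1)` admitting a subdivision into at most `m` half-open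
intervals on each of which it is a translation. -/
def MemGm (m : ℕ) (f : Equiv.Perm ℝ) : Prop :=
  (∀ x : ℝ, x ∉ Set.Ico (0 : ℝ) 1 → f x = x) ∧
  ∃ (k : ℕ) (a : Fin (k + 2) → ℝ), k + 1 ≤ m ∧
    a 0 = 0 ∧ a (Fin.last (k + 1)) = 1 ∧ StrictMono a ∧
    ∀ i : Fin (k + 1), ∃ c : ℝ, ∀ x ∈ Set.Ico (a i.castSucc) (a i.succ), f x = x + c

/-- `g` is periodic: every orbit `{gⁿ x : n ∈ ℤ}` is finite. -/
def IsPeriodicPerm (g : Equiv.Perm ℝ) : Prop :=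
  ∀ x : ℝ, (Set.range fun n : ℤ => (g ^ n) x).Finite

/-- `f` is a restricted rotation: for some half-open interval `J = [a, b) ⊆ [0,1)` and some
`α ∈ [0, b - a)`, `f` is the identity outside `J` and sends `x ∈ J` to
`a + ((x - a + α) mod (b - a))`. -/
def IsRestrictedRotation (f : Equiv.Perm ℝ) : Prop :=
  ∃ a b α : ℝ, 0 ≤ a ∧ a < b ∧ b ≤ 1 ∧ α ∈ Set.Ico (0 : ℝ) (b - a) ∧
    (∀ x : ℝ, x ∉ Set.Ico a b → f x = x) ∧
    ∀ x ∈ Set.Ico a b, f x = x + α - (b - a) * (⌊(x - a + α) / (b - a)⌋ : ℝ)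

/-- `Δ_α`: the additive subgroup of `ℝ` generated by `α 0, …, α (p-1)` and `1`. -/
def Delta {p : ℕ} (α : Fin p → ℝ) : AddSubgroup ℝ :=
  AddSubgroup.closure (Set.range α ∪ {1})

/-- `g ∈ Γ_α`: `g` is an IET all of whose discontinuity points (as a map of `[0,1)`)
belong to the subgroup `Δ`. -/
def MemGamma (Δ : AddSubgroup ℝ) (g : Equiv.Perm ℝ) : Prop :=
  IsIET g ∧
  ∀ x ∈ Set.Ico (0 : ℝ) 1, ¬ContinuousWithinAt (⇑g) (Set.Ico (0 : ℝ) 1) x → x ∈ Δ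

/-- `g ∈ Γ_α(J)` for `J = [c, d)`: `g` is an IET supported in `[c, d)` all of whose
discontinuity points belong to `Δ`. -/
def MemGammaJ (Δ : AddSubgroup ℝ) (c d : ℝ) (g : Equiv.Perm ℝ) : Prop :=
  IsIET g ∧ (∀ x : ℝ, x ∉ Set.Ico c d → g x = x) ∧
  ∀ x ∈ Set.Ico (0 : ℝ) 1, ¬ContinuousWithinAt (⇑g) (Set.Ico (0 : ℝ) 1) x → x ∈ Δ



/-! Let `Z` be the union of the `g`-orbits of the break points of `g`; it is finite because `g`
is periodic, and `g` is a translation on each gap of `Z`. The image of a gap is an interval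
containing no point of `Z`, so gaps do not shrink under `g`; as `g` permutes `Z`, the total
length forces equality, and `g` is the exchange of the gaps along a length-preserving
permutation `σ` of `Z`.

Cut every gap into two halves. An involution `θ` reversing each cycle of `σ` (so
`θ σ θ = σ⁻¹`) preserves lengths, and on the halves `σ ⊕ σ = ⁅σ ⊕ 1, swap ∘ (θ ⊕ θ)⁆`. Since
exchanging pieces along length-preserving permutations is a group homomorphism, `g` is the
commutator of the two corresponding interval exchanges. -/

open Equiv Set

namespace Equiv.Perm

variable {α β : Type*}

def fiberPreserving (L : α → β) : Subgroup (Perm α) where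
  carrier := {π | ∀ x, L (π x) = L x}
  mul_mem' hπ hρ x := (hπ _).trans (hρ x)
  one_mem' _ := rfl
  inv_mem' {π} hπ x := by simpa using (hπ (π⁻¹ x)).symm

lemma SameCycle.apply_eq_of_mem_fiberPreserving {L : α → β} {σ : Perm α}
    (hσ : σ ∈ fiberPreserving L) {x y : α} (h : σ.SameCycle x y) : L x = L y := by
  obtain ⟨k, rfl⟩ := h
  exact (zpow_mem hσ k x).symm

lemma apply_mem_iff_of_forall_notMem {f : Perm α} {s : Set α} (hf : ∀ x ∉ s, f x = x)
    (x : α) : f x ∈ s ↔ x ∈ s := by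
  refine ⟨fun hfx => ?_, fun hx => ?_⟩
  · by_contra hx
    exact hx (hf x hx ▸ hfx)
  · by_contra hfx
    rw [f.injective (hf _ hfx)] at hfx
    exact hfx hx

section CycleReflection

variable (σ : Perm α)

noncomputable def cycleBase (x : α) : α :=
  (Quotient.mk (SameCycle.setoid σ) x).out

lemma sameCycle_cycleBase (x : α) : σ.SameCycle (cycleBase σ x) x :=
  Quotient.mk_out (s := SameCycle.setoid σ) x

lemma cycleBase_eq_of_sameCycle {x y : α} (h : σ.SameCycle x y) :
    cycleBase σ x = cycleBase σ y :=
  congrArg Quotient.out (Quotient.sound (s := SameCycle.setoid σ) h)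

lemma zpow_neg_apply_eq_of_zpow_apply_eq {m n : ℤ} {x : α} (h : (σ ^ m) x = (σ ^ n) x) :
    (σ ^ (-m)) x = (σ ^ (-n)) x := by
  have := congrArg (σ ^ (-m - n)) h
  simp only [← Perm.mul_apply, ← zpow_add] at this
  rwa [sub_add_cancel, show -m - n + m = -n by ring, eq_comm] at this

/-- `σ ^ k b ↦ σ ^ (-k) b`, where `b` is the chosen base point of the cycle. -/
noncomputable def cycleReflectionFun (x : α) : α :=
  (σ ^ (-(sameCycle_cycleBase σ x).choose)) (cycleBase σ x)

lemma cycleReflectionFun_eq_of_zpow_apply_eq {x : α} {k : ℤ}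
    (hk : (σ ^ k) (cycleBase σ x) = x) :
    cycleReflectionFun σ x = (σ ^ (-k)) (cycleBase σ x) :=
  zpow_neg_apply_eq_of_zpow_apply_eq σ ((sameCycle_cycleBase σ x).choose_spec.trans hk.symm)

lemma cycleReflectionFun_zpow_apply (x : α) (n : ℤ) :
    cycleReflectionFun σ ((σ ^ n) (cycleBase σ x)) = (σ ^ (-n)) (cycleBase σ x) := by
  have hbase : cycleBase σ ((σ ^ n) (cycleBase σ x)) = cycleBase σ x :=
    cycleBase_eq_of_sameCycle σ <|
      (show σ.SameCycle (cycleBase σ x) _ from ⟨n, rfl⟩).symm.trans (sameCycle_cycleBase σ x)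
  have := cycleReflectionFun_eq_of_zpow_apply_eq σ (x := (σ ^ n) (cycleBase σ x)) (k := n)
    (by rw [hbase])
  rwa [hbase] at this

lemma cycleReflectionFun_involutive : Function.Involutive (cycleReflectionFun σ) := by
  intro x
  obtain ⟨k, hk⟩ := sameCycle_cycleBase σ x
  rw [← hk, cycleReflectionFun_zpow_apply, cycleReflectionFun_zpow_apply, neg_neg]

noncomputable def cycleReflection : Perm α :=
  (cycleReflectionFun_involutive σ).toPerm

lemma cycleReflection_involutive : Function.Involutive (cycleReflection σ) :=
  cycleReflectionFun_involutive σ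

lemma cycleReflection_apply_apply (x : α) :
    cycleReflection σ (σ x) = σ⁻¹ (cycleReflection σ x) := by
  obtain ⟨k, hk⟩ := sameCycle_cycleBase σ x
  show cycleReflectionFun σ (σ x) = σ⁻¹ (cycleReflectionFun σ x)
  rw [← hk, ← Perm.mul_apply, ← zpow_one_add, cycleReflectionFun_zpow_apply,
    cycleReflectionFun_zpow_apply, neg_add, zpow_add, zpow_neg_one, Perm.mul_apply]

lemma sameCycle_cycleReflection (x : α) : σ.SameCycle x (cycleReflection σ x) := by
  obtain ⟨k, hk⟩ := sameCycle_cycleBase σ x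
  show σ.SameCycle x (cycleReflectionFun σ x)
  rw [← hk, cycleReflectionFun_zpow_apply]
  exact (show σ.SameCycle (cycleBase σ x) _ from ⟨k, rfl⟩).symm.trans ⟨-k, rfl⟩

end CycleReflection

lemma sumCongr_self_eq_commutator (σ θ : Perm α) (hθ : Function.Involutive θ)
    (hσθ : ∀ x, θ (σ x) = σ⁻¹ (θ x)) :
    Perm.sumCongr σ σ =
      ⁅Perm.sumCongr σ (1 : Perm α),
        (Equiv.sumComm α α : Perm (α ⊕ α)) * Perm.sumCongr θ θ⁆ := by
  have hθσ : ∀ x, θ (σ.symm x) = σ (θ x) := fun x => by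
    simpa using congrArg σ (hσθ (σ.symm x)).symm
  have hθθ : ∀ x, θ.symm x = θ x := fun x => θ.symm_apply_eq.2 (hθ x).symm
  ext (x | x) <;> simp [commutatorElement_def, hθ x, hθθ, hθσ]

end Equiv.Perm

lemma exists_subdivision_of_finset (E : Finset ℝ) (hE : ∀ e ∈ E, e ∈ Icc (0 : ℝ) 1)
    (h0 : (0 : ℝ) ∈ E) (h1 : (1 : ℝ) ∈ E) :
    ∃ (m : ℕ) (a : Fin (m + 2) → ℝ), a 0 = 0 ∧ a (Fin.last (m + 1)) = 1 ∧ StrictMono a ∧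
      ∀ e ∈ E, ∀ i : Fin (m + 1), e ∉ Ioo (a i.castSucc) (a i.succ) := by
  have hcard : E.card = E.card - 2 + 2 := by
    have := Finset.one_lt_card.2 ⟨0, h0, 1, h1, zero_ne_one⟩
    omega
  set a := E.orderEmbOfFin hcard
  refine ⟨E.card - 2, a, ?_, ?_, a.strictMono, fun e he i hei => ?_⟩
  · rw [show (0 : Fin (E.card - 2 + 2)) = ⟨0, by omega⟩ from rfl, Finset.orderEmbOfFin_zero]
    exact le_antisymm (E.min'_le 0 h0) (hE _ (E.min'_mem _)).1
  · rw [show Fin.last (E.card - 2 + 1) = ⟨E.card - 2 + 2 - 1, by omega⟩ from rfl,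
      Finset.orderEmbOfFin_last _ (by omega)]
    exact le_antisymm (hE _ (E.max'_mem _)).2 (E.le_max' 1 h1)
  obtain ⟨k, rfl⟩ : e ∈ range a := by rwa [Finset.range_orderEmbOfFin]
  have hik : i.castSucc < k ∧ k < i.succ := by simpa using hei
  exact (Fin.castSucc_lt_iff_succ_le.1 hik.1).not_gt hik.2

lemma isIET_of_forall_translate {ι : Type*} [Finite ι] {f : Perm ℝ}
    (hfix : ∀ x, x ∉ Ico (0 : ℝ) 1 → f x = x) (l r : ι → ℝ)
    (hcover : ∀ x ∈ Ico (0 : ℝ) 1, ∃ i, x ∈ Ico (l i) (r i))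
    (htrans : ∀ i, ∃ c, ∀ x ∈ Ico (l i) (r i), f x = x + c) : IsIET f := by
  have := Fintype.ofFinite ι
  classical
  obtain ⟨m, a, ha0, ha1, hmono, hgap⟩ := exists_subdivision_of_finset
    (insert 0 (insert 1 ((Finset.univ.image r).filter (· ∈ Ioo (0 : ℝ) 1))))
    (by
      intro e he
      simp only [Finset.mem_insert, Finset.mem_filter] at he
      rcases he with rfl | rfl | ⟨-, he⟩
      exacts [⟨le_rfl, zero_le_one⟩, ⟨zero_le_one, le_rfl⟩, Ioo_subset_Icc_self he])
    (Finset.mem_insert_self _ _) (Finset.mem_insert_of_mem (Finset.mem_insert_self _ _))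
  refine ⟨hfix, m, a, ha0, ha1, hmono, fun i => ?_⟩
  have hlo : 0 ≤ a i.castSucc := ha0 ▸ hmono.monotone (Fin.zero_le _)
  have hhi : a i.succ ≤ 1 := ha1 ▸ hmono.monotone (Fin.le_last _)
  obtain ⟨j, hj⟩ := hcover _ ⟨hlo, (hmono Fin.castSucc_lt_succ).trans_le hhi⟩
  obtain ⟨c, hc⟩ := htrans j
  refine ⟨c, fun x hx => hc x ⟨hj.1.trans hx.1, hx.2.trans_le ?_⟩⟩
  by_contra! hr
  refine hgap (r j) ?_ i ⟨hj.2, hr⟩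
  simp only [Finset.mem_insert, Finset.mem_filter, Finset.mem_image, Finset.mem_univ, true_and]
  exact Or.inr (Or.inr ⟨⟨j, rfl⟩, hlo.trans_lt hj.2, hr.trans_le hhi⟩)

structure IcoPartition (ι : Type*) where
  left : ι → ℝ
  right : ι → ℝ
  Ico_subset : ∀ i, Ico (left i) (right i) ⊆ Ico 0 1
  exists_mem_Ico : ∀ x ∈ Ico (0 : ℝ) 1, ∃ i, x ∈ Ico (left i) (right i)
  eq_of_mem_Ico : ∀ {i j x}, x ∈ Ico (left i) (right i) → x ∈ Ico (left j) (right j) →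
    i = j

namespace IcoPartition

variable {ι : Type*} (P : IcoPartition ι)

def len (i : ι) : ℝ := P.right i - P.left i

open Classical in
noncomputable def exchangeFun (π : Perm ι) (x : ℝ) : ℝ :=
  if h : ∃ i, x ∈ Ico (P.left i) (P.right i) then x - P.left h.choose + P.left (π h.choose)
  else x

variable {P}

lemma exchangeFun_of_mem {π : Perm ι} {i : ι} {x : ℝ} (hx : x ∈ Ico (P.left i) (P.right i)) :
    P.exchangeFun π x = x - P.left i + P.left (π i) := by
  have h : ∃ i, x ∈ Ico (P.left i) (P.right i) := ⟨i, hx⟩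
  rw [exchangeFun, dif_pos h, P.eq_of_mem_Ico h.choose_spec hx]

lemma exchangeFun_of_notMem {π : Perm ι} {x : ℝ} (hx : x ∉ Ico (0 : ℝ) 1) :
    P.exchangeFun π x = x :=
  dif_neg fun ⟨i, hi⟩ => hx (P.Ico_subset i hi)

lemma translate_mem_Ico {π : Perm ι} (hπ : π ∈ Perm.fiberPreserving P.len) {i : ι} {x : ℝ}
    (hx : x ∈ Ico (P.left i) (P.right i)) :
    x - P.left i + P.left (π i) ∈ Ico (P.left (π i)) (P.right (π i)) := by
  have hlen : P.right (π i) - P.left (π i) = P.right i - P.left i := hπ i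
  constructor <;> linarith [hx.1, hx.2]

lemma exchangeFun_mul {π ρ : Perm ι} (hρ : ρ ∈ Perm.fiberPreserving P.len) :
    P.exchangeFun (π * ρ) = P.exchangeFun π ∘ P.exchangeFun ρ := by
  ext x
  by_cases hx : ∃ i, x ∈ Ico (P.left i) (P.right i)
  · obtain ⟨i, hi⟩ := hx
    rw [Function.comp_apply, exchangeFun_of_mem hi, exchangeFun_of_mem hi,
      exchangeFun_of_mem (translate_mem_Ico hρ hi), Perm.mul_apply]
    ring
  · have hx' : x ∉ Ico (0 : ℝ) 1 := fun h => hx (P.exists_mem_Ico x h)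
    rw [Function.comp_apply, exchangeFun_of_notMem hx', exchangeFun_of_notMem hx',
      exchangeFun_of_notMem hx']

lemma exchangeFun_one : P.exchangeFun 1 = id := by
  ext x
  by_cases hx : ∃ i, x ∈ Ico (P.left i) (P.right i)
  · obtain ⟨i, hi⟩ := hx
    rw [exchangeFun_of_mem hi, Perm.one_apply, id, sub_add_cancel]
  · exact dif_neg hx

variable (P)

noncomputable def exchange : Perm.fiberPreserving P.len →* Perm ℝ :=
  MonoidHom.mk'
    (fun π =>
      { toFun := P.exchangeFun π
        invFun := P.exchangeFun π⁻¹
        left_inv := fun x => by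
          rw [← Function.comp_apply (f := P.exchangeFun _), ← exchangeFun_mul π.2,
            inv_mul_cancel, exchangeFun_one, id]
        right_inv := fun x => by
          rw [← Function.comp_apply (f := P.exchangeFun _), ← exchangeFun_mul (inv_mem π.2),
            mul_inv_cancel, exchangeFun_one, id] })
    (fun π ρ => Equiv.ext fun x => congrFun (exchangeFun_mul ρ.2) x)

variable {P}

lemma exchange_apply (π : Perm.fiberPreserving P.len) (x : ℝ) :
    P.exchange π x = P.exchangeFun π x :=
  rfl

lemma eq_exchange_of_forall_mem_Ico {f : Perm ℝ} (hfix : ∀ x, x ∉ Ico (0 : ℝ) 1 → f x = x)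
    (π : Perm.fiberPreserving P.len)
    (htrans : ∀ i, ∀ x ∈ Ico (P.left i) (P.right i),
      f x = x - P.left i + P.left ((π : Perm ι) i)) :
    f = P.exchange π := by
  ext x
  by_cases hx : x ∈ Ico (0 : ℝ) 1
  · obtain ⟨i, hi⟩ := P.exists_mem_Ico x hx
    rw [htrans i x hi, exchange_apply, exchangeFun_of_mem hi]
  · rw [hfix x hx, exchange_apply, exchangeFun_of_notMem hx]

lemma isIET_exchange [Finite ι] (π : Perm.fiberPreserving P.len) : IsIET (P.exchange π) :=
  isIET_of_forall_translate (fun _ hx => exchangeFun_of_notMem hx) P.left P.right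
    P.exists_mem_Ico fun i => ⟨P.left ((π : Perm ι) i) - P.left i, fun x hx => by
      rw [exchange_apply, exchangeFun_of_mem hx]
      ring⟩

variable (P)

noncomputable def mid (i : ι) : ℝ := (P.left i + P.right i) / 2

lemma Ico_half_subset (j : ι ⊕ ι) :
    Ico (Sum.elim P.left P.mid j) (Sum.elim P.mid P.right j) ⊆
      Ico (P.left (j.elim id id)) (P.right (j.elim id id)) := by
  rcases j with i | i <;> intro x hx <;>
    simp only [Sum.elim_inl, Sum.elim_inr, id, mid, mem_Ico] at hx ⊢ <;>
    constructor <;> linarith [hx.1, hx.2]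

noncomputable def halve : IcoPartition (ι ⊕ ι) where
  left := Sum.elim P.left P.mid
  right := Sum.elim P.mid P.right
  Ico_subset j := (P.Ico_half_subset j).trans (P.Ico_subset _)
  exists_mem_Ico x hx := by
    obtain ⟨i, hi⟩ := P.exists_mem_Ico x hx
    rcases lt_or_ge x (P.mid i) with h | h
    exacts [⟨.inl i, hi.1, h⟩, ⟨.inr i, h, hi.2⟩]
  eq_of_mem_Ico {j k x} hj hk := by
    have hjk := P.eq_of_mem_Ico (P.Ico_half_subset j hj) (P.Ico_half_subset k hk)
    rcases j with i | i <;> rcases k with i' | i' <;>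
      simp only [Sum.elim_inl, Sum.elim_inr, id, mem_Ico] at hjk hj hk <;> subst hjk
    exacts [rfl, absurd hk.1 (not_le.2 hj.2), absurd hj.1 (not_le.2 hk.2), rfl]

lemma halve_len (j : ι ⊕ ι) : P.halve.len j = P.len (j.elim id id) / 2 := by
  rcases j with i | i <;> simp only [halve, len, mid, Sum.elim_inl, Sum.elim_inr, id] <;> ring

variable {P}

lemma sumCongr_mem_halve {σ τ : Perm ι} (hσ : σ ∈ Perm.fiberPreserving P.len)
    (hτ : τ ∈ Perm.fiberPreserving P.len) :
    Perm.sumCongr σ τ ∈ Perm.fiberPreserving P.halve.len := by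
  rintro (i | i) <;> simp only [halve_len, Perm.sumCongr_apply, Sum.map_inl, Sum.map_inr,
    Sum.elim_inl, Sum.elim_inr, id, hσ i, hτ i]

lemma sumComm_mem_halve :
    (Equiv.sumComm ι ι : Perm (ι ⊕ ι)) ∈ Perm.fiberPreserving P.halve.len := by
  rintro (i | i) <;> simp only [halve_len, Equiv.sumComm_apply, Sum.swap_inl, Sum.swap_inr,
    Sum.elim_inl, Sum.elim_inr]

lemma halve_exchange_sumCongr (σ : Perm.fiberPreserving P.len) :
    P.halve.exchange ⟨Perm.sumCongr σ σ, sumCongr_mem_halve σ.2 σ.2⟩ = P.exchange σ := by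
  refine (eq_exchange_of_forall_mem_Ico (fun _ hx => exchangeFun_of_notMem hx) _ ?_).symm
  rintro (i | i) x hx
  · rw [exchange_apply, exchangeFun_of_mem (P.Ico_half_subset (.inl i) hx)]
    rfl
  · rw [exchange_apply, exchangeFun_of_mem (P.Ico_half_subset (.inr i) hx)]
    have hlen : P.len ((σ : Perm ι) i) = P.len i := σ.2 i
    simp only [halve, mid, len, Perm.sumCongr_apply, Sum.map_inr, Sum.elim_inr, id] at hlen ⊢
    linarith

theorem exists_isIET_commutator_eq_exchange [Finite ι] (σ : Perm.fiberPreserving P.len) :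
    ∃ a b : Perm ℝ, IsIET a ∧ IsIET b ∧ P.exchange σ = ⁅a, b⁆ := by
  set θ := Perm.cycleReflection (σ : Perm ι)
  have hθ : θ ∈ Perm.fiberPreserving P.len := fun x =>
    ((Perm.sameCycle_cycleReflection _ x).apply_eq_of_mem_fiberPreserving σ.2).symm
  let a : Perm.fiberPreserving P.halve.len :=
    ⟨Perm.sumCongr σ 1, sumCongr_mem_halve σ.2 (one_mem _)⟩
  let b : Perm.fiberPreserving P.halve.len :=
    ⟨Equiv.sumComm ι ι * Perm.sumCongr θ θ,
      mul_mem sumComm_mem_halve (sumCongr_mem_halve hθ hθ)⟩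
  refine ⟨P.halve.exchange a, P.halve.exchange b, isIET_exchange a, isIET_exchange b, ?_⟩
  rw [← map_commutatorElement, ← P.halve_exchange_sumCongr]
  congr 1
  ext1
  simp only [a, b, commutatorElement_def, Subgroup.coe_mul, Subgroup.coe_inv]
  exact Perm.sumCongr_self_eq_commutator _ θ (Perm.cycleReflection_involutive _)
    (Perm.cycleReflection_apply_apply _)

end IcoPartition

section Gaps

variable {Z : Finset ℝ} {z w x : ℝ}

noncomputable def gapEnd (Z : Finset ℝ) (z : ℝ) : ℝ :=
  if h : ((insert 1 Z).filter (z < ·)).Nonempty then ((insert 1 Z).filter (z < ·)).min' h else 1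

lemma gapEnd_nonempty (hz : z < 1) : ((insert 1 Z).filter (z < ·)).Nonempty :=
  ⟨1, Finset.mem_filter.2 ⟨Finset.mem_insert_self _ _, hz⟩⟩

lemma gapEnd_mem (hz : z < 1) : gapEnd Z z ∈ insert 1 Z := by
  rw [gapEnd, dif_pos (gapEnd_nonempty hz)]
  exact (Finset.mem_filter.1 (Finset.min'_mem _ _)).1

lemma lt_gapEnd (hz : z < 1) : z < gapEnd Z z := by
  rw [gapEnd, dif_pos (gapEnd_nonempty hz)]
  exact (Finset.mem_filter.1 (Finset.min'_mem _ _)).2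

lemma gapEnd_le (hz : z < 1) (hw : w ∈ insert 1 Z) (hzw : z < w) : gapEnd Z z ≤ w := by
  rw [gapEnd, dif_pos (gapEnd_nonempty hz)]
  exact Finset.min'_le _ _ (Finset.mem_filter.2 ⟨hw, hzw⟩)

lemma gapEnd_le_one (hz : z < 1) : gapEnd Z z ≤ 1 :=
  gapEnd_le hz (Finset.mem_insert_self _ _) hz

lemma eq_of_mem_gap (hz : z ∈ Z) (hw : w ∈ Z) (hz1 : z < 1) (hw1 : w < 1)
    (hxz : x ∈ Ico z (gapEnd Z z)) (hxw : x ∈ Ico w (gapEnd Z w)) : z = w := by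
  by_contra hne
  rcases lt_or_gt_of_ne hne with h | h
  · linarith [gapEnd_le hz1 (Finset.mem_insert_of_mem hw) h, hxz.2, hxw.1]
  · linarith [gapEnd_le hw1 (Finset.mem_insert_of_mem hz) h, hxw.2, hxz.1]

lemma exists_mem_gap (h0 : (0 : ℝ) ∈ Z) (hx : x ∈ Ico (0 : ℝ) 1) :
    ∃ z ∈ Z, x ∈ Ico z (gapEnd Z z) := by
  have hne : (Z.filter (· ≤ x)).Nonempty := ⟨0, Finset.mem_filter.2 ⟨h0, hx.1⟩⟩
  obtain ⟨hz, hzx⟩ := Finset.mem_filter.1 (Finset.max'_mem _ hne)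
  refine ⟨_, hz, hzx, ?_⟩
  by_contra! hle
  have hz1 : (Z.filter (· ≤ x)).max' hne < 1 := hzx.trans_lt hx.2
  rcases Finset.mem_insert.1 (gapEnd_mem (Z := Z) hz1) with h1 | hmem
  · linarith [hx.2]
  · have := (Z.filter (· ≤ x)).le_max' _ (Finset.mem_filter.2 ⟨hmem, hle⟩)
    linarith [lt_gapEnd (Z := Z) hz1]

noncomputable def gapPartition (Z : Finset ℝ) (h0 : (0 : ℝ) ∈ Z)
    (hsub : ∀ z ∈ Z, z ∈ Ico (0 : ℝ) 1) : IcoPartition Z where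
  left z := z
  right z := gapEnd Z z
  Ico_subset z _ hx :=
    ⟨(hsub z z.2).1.trans hx.1, hx.2.trans_le (gapEnd_le_one (hsub z z.2).2)⟩
  exists_mem_Ico x hx := by
    obtain ⟨z, hz, hxz⟩ := exists_mem_gap h0 hx
    exact ⟨⟨z, hz⟩, hxz⟩
  eq_of_mem_Ico {z w x} hz hw :=
    Subtype.ext (eq_of_mem_gap z.2 w.2 (hsub z z.2).2 (hsub w w.2).2 hz hw)

end Gaps

structure IsInvariantCutSet (f : Perm ℝ) (Z : Finset ℝ) : Prop where
  apply_eq_self_of_notMem : ∀ x, x ∉ Ico (0 : ℝ) 1 → f x = x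
  zero_mem : (0 : ℝ) ∈ Z
  subset_Ico : ∀ z ∈ Z, z ∈ Ico (0 : ℝ) 1
  apply_mem_iff : ∀ x, f x ∈ Z ↔ x ∈ Z
  apply_eq_of_mem_gap : ∀ z ∈ Z, ∀ x ∈ Ico z (gapEnd Z z), f x = x + (f z - z)

namespace IsInvariantCutSet

variable {f : Perm ℝ} {Z : Finset ℝ}

/-- The image of the gap at `z` is an interval starting at `f z` which contains no point of
`Z ∪ {1}`, since `f⁻¹` maps `Z ∪ {1}` into itself. -/
lemma gapEnd_sub_le (hZ : IsInvariantCutSet f Z) {z : ℝ} (hz : z ∈ Z) :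
    gapEnd Z z - z ≤ gapEnd Z (f z) - f z := by
  have hz1 := (hZ.subset_Ico z hz).2
  have hfz1 := (hZ.subset_Ico _ ((hZ.apply_mem_iff z).2 hz)).2
  by_contra! hlt
  set x := gapEnd Z (f z) - (f z - z)
  have hzx : z < x := by linarith [lt_gapEnd (Z := Z) hfz1]
  have hx : x ∈ Ico z (gapEnd Z z) := ⟨hzx.le, by linarith⟩
  have hfx : f x = gapEnd Z (f z) := by rw [hZ.apply_eq_of_mem_gap z hz x hx]; ring
  have hxZ : x ∈ insert 1 Z := by
    rcases Finset.mem_insert.1 (gapEnd_mem (Z := Z) hfz1) with h1 | hmem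
    · have hxI : x ∈ Ico (0 : ℝ) 1 :=
        ⟨(hZ.subset_Ico z hz).1.trans hx.1, hx.2.trans_le (gapEnd_le_one hz1)⟩
      have := ((Perm.apply_mem_iff_of_forall_notMem hZ.apply_eq_self_of_notMem x).2 hxI).2
      linarith
    · exact Finset.mem_insert_of_mem ((hZ.apply_mem_iff x).1 (hfx ▸ hmem))
  linarith [gapEnd_le hz1 hxZ hzx, hx.2]

lemma gapEnd_apply_sub (hZ : IsInvariantCutSet f Z) {z : ℝ} (hz : z ∈ Z) :
    gapEnd Z (f z) - f z = gapEnd Z z - z := by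
  have hsum : ∑ w : Z, (gapEnd Z w - w) =
      ∑ w : Z, (gapEnd Z (f.subtypePerm hZ.apply_mem_iff w) - f.subtypePerm hZ.apply_mem_iff w) :=
    (Equiv.sum_comp (f.subtypePerm hZ.apply_mem_iff) fun w : Z => gapEnd Z w - w).symm
  exact ((Finset.sum_eq_sum_iff_of_le fun w _ => hZ.gapEnd_sub_le w.2).1 hsum ⟨z, hz⟩
    (Finset.mem_univ _)).symm

lemma subtypePerm_mem_fiberPreserving (hZ : IsInvariantCutSet f Z) :
    f.subtypePerm hZ.apply_mem_iff ∈
      Perm.fiberPreserving (gapPartition Z hZ.zero_mem hZ.subset_Ico).len :=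
  fun z => hZ.gapEnd_apply_sub z.2

lemma eq_exchange (hZ : IsInvariantCutSet f Z) :
    f = (gapPartition Z hZ.zero_mem hZ.subset_Ico).exchange
      ⟨f.subtypePerm hZ.apply_mem_iff, hZ.subtypePerm_mem_fiberPreserving⟩ :=
  IcoPartition.eq_exchange_of_forall_mem_Ico hZ.apply_eq_self_of_notMem _ fun z x hx => by
    rw [hZ.apply_eq_of_mem_gap z z.2 x hx]
    simp only [gapPartition, Perm.subtypePerm_apply]
    ring

end IsInvariantCutSet

lemma exists_mem_Ico_of_subdivision {m : ℕ} {a : Fin (m + 2) → ℝ} (ha0 : a 0 = 0)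
    (ha1 : a (Fin.last (m + 1)) = 1) {x : ℝ} (hx : x ∈ Ico (0 : ℝ) 1) :
    ∃ i : Fin (m + 1), x ∈ Ico (a i.castSucc) (a i.succ) := by
  by_contra! h
  have hle : ∀ k : Fin (m + 2), a k ≤ x := by
    intro k
    induction k using Fin.induction with
    | zero => exact ha0 ▸ hx.1
    | succ i ih => simpa [ih] using h i
  linarith [hle (Fin.last _), hx.2]

/-- The orbits of the break points of a periodic IET form an invariant cut set. -/
lemma exists_isInvariantCutSet {g : Perm ℝ} (hg : IsIET g) (hper : IsPeriodicPerm g) :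
    ∃ Z, IsInvariantCutSet g Z := by
  obtain ⟨hfix, m, a, ha0, ha1, hmono, htrans⟩ := hg
  have hfin : (⋃ i : Fin (m + 1), range fun n : ℤ => (g ^ n) (a i.castSucc)).Finite :=
    finite_iUnion fun i => hper _
  set Z := hfin.toFinset
  have hmem : ∀ y, y ∈ Z ↔ ∃ i : Fin (m + 1), ∃ n : ℤ, (g ^ n) (a i.castSucc) = y := by
    simp [Z]
  have ha_mem : ∀ k, a k ∈ insert 1 Z := by
    intro k
    induction k using Fin.lastCases with
    | last => exact ha1 ▸ Finset.mem_insert_self _ _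
    | cast i => exact Finset.mem_insert_of_mem ((hmem _).2 ⟨i, 0, rfl⟩)
  have ha_Ico : ∀ i : Fin (m + 1), a i.castSucc ∈ Ico (0 : ℝ) 1 := fun i =>
    ⟨ha0 ▸ hmono.monotone (Fin.zero_le _), ha1 ▸ hmono (Fin.castSucc_lt_last i)⟩
  have hsub : ∀ z ∈ Z, z ∈ Ico (0 : ℝ) 1 := by
    intro z hz
    obtain ⟨i, n, rfl⟩ := (hmem z).1 hz
    exact (Perm.apply_mem_iff_of_forall_notMem
      (fun y hy => Perm.zpow_apply_eq_self_of_apply_eq_self (hfix y hy) n) _).2 (ha_Ico i)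
  refine ⟨Z, hfix, (hmem 0).2 ⟨0, 0, by simp [ha0]⟩, hsub, fun x => ?_, fun z hz x hx => ?_⟩
  · simp only [hmem]
    constructor
    · rintro ⟨i, n, hn⟩
      exact ⟨i, -1 + n, by
        rw [zpow_add, zpow_neg_one, Perm.mul_apply, hn]; simp⟩
    · rintro ⟨i, n, rfl⟩
      exact ⟨i, 1 + n, by rw [zpow_add, zpow_one, Perm.mul_apply]⟩
  · obtain ⟨i, hi⟩ := exists_mem_Ico_of_subdivision ha0 ha1 (hsub z hz)
    obtain ⟨c, hc⟩ := htrans i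
    have hend : gapEnd Z z ≤ a i.succ := gapEnd_le (hsub z hz).2 (ha_mem _) hi.2
    rw [hc x ⟨hi.1.trans hx.1, hx.2.trans_le hend⟩, hc z hi]
    ring

/-- Every periodic interval exchange transformation is a commutator in `𝒢`. -/
theorem periodic_IET_is_commutator (g : Equiv.Perm ℝ) (hg : IsIET g)
    (hper : IsPeriodicPerm g) :
    ∃ a b : Equiv.Perm ℝ, IsIET a ∧ IsIET b ∧ g = ⁅a, b⁆ := by
  obtain ⟨Z, hZ⟩ := exists_isInvariantCutSet hg hper
  rw [hZ.eq_exchange]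
  exact IcoPartition.exists_isIET_commutator_eq_exchange _
end

section
/- Every periodic interval exchange transformation is strongly reversible in 𝒢: if g ∈ 𝒢 is periodic, then there exists an involution h ∈ 𝒢 (h∘h = id) such that h∘g∘h⁻¹ = g⁻¹. -/
open scoped commutatorElement

theorem Equiv.Perm.apply_inv_self {α : Type*} (f : Equiv.Perm α) (x : α) : f (f⁻¹ x) = x := by
  simp only [Equiv.Perm.coe_inv, Equiv.apply_symm_apply]

theorem Equiv.Perm.inv_apply_self {α : Type*} (f : Equiv.Perm α) (x : α) : f⁻¹ (f x) = x := by
  simp only [Equiv.Perm.coe_inv, Equiv.symm_apply_apply]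

namespace PIETAux

noncomputable def lpt (O : Set ℝ) (x : ℝ) : ℝ := sSup (O ∩ Set.Iic x)

structure Setup (g : Equiv.Perm ℝ) (O : Set ℝ) : Prop where
  fin : O.Finite
  zero : (0:ℝ) ∈ O
  one : (1:ℝ) ∈ O
  sub : O ⊆ Set.Icc 0 1
  stab : ∀ y ∈ O, g y ∈ O
  stabInv : ∀ y ∈ O, g⁻¹ y ∈ O
  fix : ∀ x : ℝ, x ∉ Set.Ico (0:ℝ) 1 → g x = x
  loc : ∀ x ∈ Set.Ico (0:ℝ) 1, ∀ y ∈ Set.Ico (0:ℝ) 1, lpt O x = lpt O y → g x - x = g y - y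

variable {g : Equiv.Perm ℝ} {O : Set ℝ}

section lpt
variable {g : Equiv.Perm ℝ} {O : Set ℝ}

lemma lpt_mem (hfin : O.Finite) (h0 : (0:ℝ) ∈ O) {x : ℝ} (hx : 0 ≤ x) :
    lpt O x ∈ O ∧ lpt O x ≤ x := by
  have hne : (O ∩ Set.Iic x).Nonempty := ⟨0, h0, hx⟩
  have := hne.csSup_mem (hfin.inter_of_left _)
  exact ⟨this.1, this.2⟩

lemma le_lpt (hfin : O.Finite) {x o : ℝ} (ho : o ∈ O) (hox : o ≤ x) : o ≤ lpt O x :=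
  le_csSup ((hfin.inter_of_left _).bddAbove) ⟨ho, hox⟩

lemma lpt_eq (hfin : O.Finite) {x z : ℝ} (hz : z ∈ O) (hzx : z ≤ x)
    (hub : ∀ o ∈ O, o ≤ x → o ≤ z) : lpt O x = z := by
  refine le_antisymm (csSup_le ⟨z, hz, hzx⟩ ?_) (le_lpt hfin hz hzx)
  rintro o ⟨ho, hox⟩; exact hub o ho hox

lemma lpt_self (hfin : O.Finite) {z : ℝ} (hz : z ∈ O) : lpt O z = z :=
  lpt_eq hfin hz le_rfl (fun _ _ h => h)

lemma fix_inv (hfix : ∀ x : ℝ, x ∉ Set.Ico (0:ℝ) 1 → g x = x)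
    {x : ℝ} (hx : x ∉ Set.Ico (0:ℝ) 1) : g⁻¹ x = x := by
  have := hfix x hx
  conv_lhs => rw [← this]
  simp

lemma mapsTo (hfix : ∀ x : ℝ, x ∉ Set.Ico (0:ℝ) 1 → g x = x)
    {x : ℝ} (hx : x ∈ Set.Ico (0:ℝ) 1) : g x ∈ Set.Ico (0:ℝ) 1 := by
  by_contra h
  have h1 : g (g x) = g x := hfix _ h
  have h2 : g x = x := g.injective h1
  rw [h2] at h; exact h hx

lemma mapsTo_inv (hfix : ∀ x : ℝ, x ∉ Set.Ico (0:ℝ) 1 → g x = x)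
    {x : ℝ} (hx : x ∈ Set.Ico (0:ℝ) 1) : g⁻¹ x ∈ Set.Ico (0:ℝ) 1 := by
  by_contra h
  have h1 : g (g⁻¹ x) = g⁻¹ x := hfix _ h
  simp only [Equiv.Perm.apply_inv_self] at h1
  rw [← h1] at h; exact h hx

lemma mapsTo_zpow (hfix : ∀ x : ℝ, x ∉ Set.Ico (0:ℝ) 1 → g x = x)
    {x : ℝ} (hx : x ∈ Set.Ico (0:ℝ) 1) (n : ℤ) : (g ^ n) x ∈ Set.Ico (0:ℝ) 1 := by
  induction n using Int.induction_on with
  | zero => simpa using hx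
  | succ k ih =>
      have : (g ^ ((k:ℤ) + 1)) x = g ((g ^ (k:ℤ)) x) := by
        rw [add_comm, zpow_add, zpow_one, Equiv.Perm.mul_apply]
      rw [this]; exact mapsTo hfix ih
  | pred k ih =>
      have : (g ^ (-(k:ℤ) - 1)) x = g⁻¹ ((g ^ (-(k:ℤ))) x) := by
        rw [sub_eq_add_neg, add_comm, zpow_add, zpow_neg_one, Equiv.Perm.mul_apply]
      rw [this]; exact mapsTo_inv hfix ih

lemma zpow_fix (hfix : ∀ x : ℝ, x ∉ Set.Ico (0:ℝ) 1 → g x = x)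
    {x : ℝ} (hx : x ∉ Set.Ico (0:ℝ) 1) (n : ℤ) : (g ^ n) x = x := by
  induction n using Int.induction_on with
  | zero => simp
  | succ k ih =>
      rw [add_comm, zpow_add, zpow_one, Equiv.Perm.mul_apply, ih, hfix x hx]
  | pred k ih =>
      rw [sub_eq_add_neg, add_comm, zpow_add, zpow_neg_one, Equiv.Perm.mul_apply, ih,
        fix_inv hfix hx]

section withS
variable (S : Setup g O)
include S

lemma lpt_mem_Ico {x : ℝ} (hx : x ∈ Set.Ico (0:ℝ) 1) : lpt O x ∈ Set.Ico (0:ℝ) 1 :=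
  ⟨(S.sub (lpt_mem S.fin S.zero hx.1).1).1,
    lt_of_le_of_lt (lpt_mem S.fin S.zero hx.1).2 hx.2⟩

end withS

end lpt

lemma zpow_succ_apply (g : Equiv.Perm ℝ) (n : ℤ) (x : ℝ) :
    (g ^ (n + 1)) x = g ((g ^ n) x) := by
  rw [add_comm, zpow_add, zpow_one, Equiv.Perm.mul_apply]

lemma zpow_pred_apply (g : Equiv.Perm ℝ) (n : ℤ) (x : ℝ) :
    (g ^ (n - 1)) x = g⁻¹ ((g ^ n) x) := by
  rw [sub_eq_add_neg, add_comm, zpow_add, zpow_neg_one, Equiv.Perm.mul_apply]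

lemma zpow_add_apply (g : Equiv.Perm ℝ) (m n : ℤ) (x : ℝ) :
    (g ^ (m + n)) x = (g ^ m) ((g ^ n) x) := by
  rw [zpow_add, Equiv.Perm.mul_apply]

section core
variable {g : Equiv.Perm ℝ} {O : Set ℝ} (S : Setup g O)
include S

lemma stab_zpow {z : ℝ} (hz : z ∈ O) (n : ℤ) : (g ^ n) z ∈ O := by
  induction n using Int.induction_on with
  | zero => simpa using hz
  | succ k ih => rw [zpow_succ_apply]; exact S.stab _ ih
  | pred k ih =>
      rw [show (-(k:ℤ) - 1) = (-(k:ℤ)) - 1 from rfl, zpow_pred_apply]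
      exact S.stabInv _ ih

lemma lpt_g {x : ℝ} (hx : x ∈ Set.Ico (0:ℝ) 1) : lpt O (g x) = g (lpt O x) := by
  set l := lpt O x with hl
  have hlO : l ∈ O := (lpt_mem S.fin S.zero hx.1).1
  have hlx : l ≤ x := (lpt_mem S.fin S.zero hx.1).2
  have hlI : l ∈ Set.Ico (0:ℝ) 1 := lpt_mem_Ico S hx
  have hll : lpt O l = l := lpt_self S.fin hlO
  have hgl : g l - l = g x - x := S.loc l hlI x hx (by rw [hll])
  refine lpt_eq S.fin (S.stab _ hlO) (by linarith) ?_
  intro o ho hogx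
  by_contra hlt
  push_neg at hlt
  -- o ∈ (g l, g x]; pull back
  set c := g x - x with hc
  set y := o - c with hy
  have hyx : y ≤ x := by simp only [hy, hc]; linarith
  have hly : l < y := by simp only [hy]; nlinarith [hgl]
  have hyI : y ∈ Set.Ico (0:ℝ) 1 := ⟨le_trans hlI.1 (le_of_lt hly), lt_of_le_of_lt hyx hx.2⟩
  have hlpty : lpt O y = l := by
    refine lpt_eq S.fin hlO (le_of_lt hly) ?_
    intro o' ho' ho'y
    exact le_lpt S.fin ho' (le_trans ho'y hyx)
  have hgy : g y - y = g x - x := S.loc y hyI x hx (by rw [hlpty, ← hl])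
  have hgyo : g y = o := by simp only [hy] at hgy ⊢; linarith
  have : g⁻¹ o ∈ O := S.stabInv _ ho
  rw [← hgyo, Equiv.Perm.inv_apply_self] at this
  have hyl : y ≤ lpt O x := le_lpt S.fin this hyx
  rw [← hl] at hyl
  linarith

lemma lpt_ginv {x : ℝ} (hx : x ∈ Set.Ico (0:ℝ) 1) : lpt O (g⁻¹ x) = g⁻¹ (lpt O x) := by
  have h := lpt_g S (mapsTo_inv S.fix hx)
  rw [Equiv.Perm.apply_inv_self] at h
  rw [h, Equiv.Perm.inv_apply_self]

lemma lpt_zpow {x : ℝ} (hx : x ∈ Set.Ico (0:ℝ) 1) (n : ℤ) :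
    lpt O ((g ^ n) x) = (g ^ n) (lpt O x) := by
  induction n using Int.induction_on with
  | zero => simp
  | succ k ih =>
      rw [zpow_succ_apply, zpow_succ_apply, lpt_g S (mapsTo_zpow S.fix hx _), ih]
  | pred k ih =>
      rw [show (-(k:ℤ) - 1) = (-(k:ℤ)) - 1 from rfl, zpow_pred_apply, zpow_pred_apply,
        lpt_ginv S (mapsTo_zpow S.fix hx _), ih]

lemma off_g {x : ℝ} (hx : x ∈ Set.Ico (0:ℝ) 1) : g x - g (lpt O x) = x - lpt O x := by
  have hlI : lpt O x ∈ Set.Ico (0:ℝ) 1 := lpt_mem_Ico S hx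
  have := S.loc (lpt O x) hlI x hx (by rw [lpt_self S.fin (lpt_mem S.fin S.zero hx.1).1])
  linarith

lemma off_zpow {x : ℝ} (hx : x ∈ Set.Ico (0:ℝ) 1) (n : ℤ) :
    (g ^ n) x - (g ^ n) (lpt O x) = x - lpt O x := by
  induction n using Int.induction_on with
  | zero => simp
  | succ k ih =>
      have h1 := off_g S (mapsTo_zpow S.fix hx k)
      rw [lpt_zpow S hx k] at h1
      rw [zpow_succ_apply, zpow_succ_apply]
      linarith
  | pred k ih =>
      have h1 := off_g S (mapsTo_zpow S.fix hx (-(k:ℤ) - 1))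
      rw [lpt_zpow S hx (-(k:ℤ) - 1)] at h1
      rw [show (-(k:ℤ) - 1) = (-(k:ℤ)) - 1 from rfl, zpow_pred_apply, zpow_pred_apply] at *
      simp only [Equiv.Perm.apply_inv_self] at h1
      linarith

end core

lemma zpow_neg_cancel_apply (g : Equiv.Perm ℝ) (n : ℤ) (x : ℝ) :
    (g ^ (-n)) ((g ^ n) x) = x := by
  rw [← zpow_add_apply]; simp

lemma zpow_comm_apply (g : Equiv.Perm ℝ) (m n : ℤ) (x : ℝ) :
    (g ^ m) ((g ^ n) x) = (g ^ n) ((g ^ m) x) := by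
  rw [← zpow_add_apply, add_comm, zpow_add_apply]

section period
variable (g : Equiv.Perm ℝ)

noncomputable def perZ (z : ℝ) : ℕ := sInf {n : ℕ | 0 < n ∧ (g ^ (n:ℤ)) z = z}
noncomputable def bZ (z : ℝ) : ℝ := sInf (Set.range fun n : ℤ => (g ^ n) z)
noncomputable def tZ (z : ℝ) : ℕ := sInf {t : ℕ | (g ^ (t:ℤ)) (bZ g z) = z}
noncomputable def eZ (z : ℝ) : ℤ := (perZ g z : ℤ) - 1 - 2 * (tZ g z : ℤ)

variable {g}

lemma fix_zpow_mul {w : ℝ} {p : ℤ} (hp : (g ^ p) w = w) (q : ℤ) : (g ^ (p * q)) w = w := by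
  induction q using Int.induction_on with
  | zero => simp
  | succ k ih =>
      rw [mul_add, mul_one, zpow_add_apply, hp, ih]
  | pred k ih =>
      have hneg : (g ^ (-p)) w = w := by
        have h2 := congrArg (⇑(g ^ (-p))) hp
        rw [zpow_neg_cancel_apply] at h2
        exact h2.symm
      rw [mul_sub, mul_one, sub_eq_add_neg, add_comm, zpow_add_apply, ih, hneg]

lemma fix_congr {w : ℝ} {p : ℤ} (hp : (g ^ p) w = w) {A B : ℤ} (hd : p ∣ A - B) :
    (g ^ A) w = (g ^ B) w := by
  obtain ⟨q, hq⟩ := hd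
  have hA : A = B + p * q := by linarith
  rw [hA, zpow_add_apply, fix_zpow_mul hp q]

lemma orbit_fix_iff (g : Equiv.Perm ℝ) (z : ℝ) (n k : ℤ) :
    (g ^ k) ((g ^ n) z) = (g ^ n) z ↔ (g ^ k) z = z := by
  rw [zpow_comm_apply]
  exact Equiv.apply_eq_iff_eq _

lemma perZ_zpow (g : Equiv.Perm ℝ) (z : ℝ) (n : ℤ) : perZ g ((g ^ n) z) = perZ g z := by
  unfold perZ
  congr 1
  ext k
  simp only [Set.mem_setOf_eq, and_congr_right_iff]
  intro _
  exact orbit_fix_iff g z n (k:ℤ)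

lemma bZ_zpow (g : Equiv.Perm ℝ) (z : ℝ) (n : ℤ) : bZ g ((g ^ n) z) = bZ g z := by
  unfold bZ
  congr 1
  ext y
  constructor
  · rintro ⟨k, rfl⟩
    refine ⟨k + n, ?_⟩
    show (g ^ (k + n)) z = (g ^ k) ((g ^ n) z)
    rw [zpow_add_apply]
  · rintro ⟨k, rfl⟩
    refine ⟨k - n, ?_⟩
    show (g ^ (k - n)) ((g ^ n) z) = (g ^ k) z
    rw [← zpow_add_apply, sub_add_cancel]

variable {O : Set ℝ} (S : Setup g O)
include S

lemma per_exists {z : ℝ} (hz : z ∈ O) : ∃ n : ℕ, 0 < n ∧ (g ^ (n:ℤ)) z = z := by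
  have key : ∀ i j : ℕ, i < j → (g ^ (i:ℤ)) z = (g ^ (j:ℤ)) z →
      ∃ n : ℕ, 0 < n ∧ (g ^ (n:ℤ)) z = z := by
    intro i j hij hfij
    refine ⟨j - i, by omega, ?_⟩
    have h2 : (g ^ ((j:ℤ) - i)) ((g ^ (i:ℤ)) z) = (g ^ (i:ℤ)) z := by
      rw [← zpow_add_apply, sub_add_cancel, ← hfij]
    have h3 := (orbit_fix_iff g z (i:ℤ) ((j:ℤ) - i)).mp h2
    rw [show ((j - i : ℕ):ℤ) = (j:ℤ) - i by omega]
    exact h3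
  have hmt : Set.MapsTo (fun n : ℕ => (g ^ (n:ℤ)) z) Set.univ O :=
    fun n _ => stab_zpow S hz _
  obtain ⟨i, -, j, -, hij, hfij⟩ :=
    Set.Infinite.exists_ne_map_eq_of_mapsTo Set.infinite_univ hmt S.fin
  rcases hij.lt_or_gt with h | h
  · exact key i j h hfij
  · exact key j i h hfij.symm

lemma perZ_pos {z : ℝ} (hz : z ∈ O) : 0 < perZ g z :=
  (Nat.sInf_mem (per_exists S hz)).1

lemma perZ_fix {z : ℝ} (hz : z ∈ O) : (g ^ (perZ g z : ℤ)) z = z :=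
  (Nat.sInf_mem (per_exists S hz)).2

lemma perZ_dvd {z : ℝ} (hz : z ∈ O) {n : ℤ} (hn : (g ^ n) z = z) : (perZ g z : ℤ) ∣ n := by
  have hppos : 0 < perZ g z := perZ_pos S hz
  have hpz : (g ^ (perZ g z : ℤ)) z = z := perZ_fix S hz
  set p := perZ g z with hp
  set r := n % (p:ℤ) with hr
  have hr0 : 0 ≤ r := Int.emod_nonneg n (by positivity)
  have hrp : r < p := Int.emod_lt_of_pos n (by positivity)
  have hdvd : (p:ℤ) ∣ n - r := Int.dvd_self_sub_of_emod_eq rfl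
  have hrz : (g ^ r) z = z := by
    have : (g ^ r) z = (g ^ n) z := by
      refine fix_congr hpz ?_
      rw [show r - n = -(n - r) by ring]
      exact dvd_neg.mpr hdvd
    rw [this, hn]
  by_contra hnd
  have hrne : r ≠ 0 := by
    intro h0
    rw [h0, sub_zero] at hdvd
    exact hnd hdvd
  have hmem : r.toNat ∈ {n : ℕ | 0 < n ∧ (g ^ (n:ℤ)) z = z} := by
    constructor
    · omega
    · rw [Int.toNat_of_nonneg hr0]; exact hrz
  have hle : perZ g z ≤ r.toNat := Nat.sInf_le hmem
  omega

lemma zpow_fix_iff {z : ℝ} (hz : z ∈ O) {n : ℤ} : (g ^ n) z = z ↔ (perZ g z : ℤ) ∣ n := by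
  refine ⟨perZ_dvd S hz, fun hd => ?_⟩
  obtain ⟨q, hq⟩ := hd
  rw [hq]
  exact fix_zpow_mul (perZ_fix S hz) q

lemma bZ_mem_orbit {z : ℝ} (hz : z ∈ O) : ∃ n : ℤ, (g ^ n) z = bZ g z := by
  have hfin : (Set.range fun n : ℤ => (g ^ n) z).Finite :=
    Set.Finite.subset S.fin (by rintro y ⟨n, rfl⟩; exact stab_zpow S hz n)
  have hne : (Set.range fun n : ℤ => (g ^ n) z).Nonempty := ⟨z, 0, by simp⟩
  have h := hne.csInf_mem hfin
  exact h

lemma bZ_mem {z : ℝ} (hz : z ∈ O) : bZ g z ∈ O := by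
  obtain ⟨n, hn⟩ := bZ_mem_orbit S hz
  rw [← hn]; exact stab_zpow S hz n

lemma perZ_bZ {z : ℝ} (hz : z ∈ O) : perZ g (bZ g z) = perZ g z := by
  obtain ⟨n, hn⟩ := bZ_mem_orbit S hz
  rw [← hn, perZ_zpow]

lemma bZ_fix {z : ℝ} (hz : z ∈ O) : (g ^ (perZ g z : ℤ)) (bZ g z) = bZ g z := by
  have h := perZ_fix S (bZ_mem S hz)
  rwa [perZ_bZ S hz] at h

lemma tZ_exists {z : ℝ} (hz : z ∈ O) :
    ∃ t : ℕ, t < perZ g z ∧ (g ^ (t:ℤ)) (bZ g z) = z := by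
  obtain ⟨n, hn⟩ := bZ_mem_orbit S hz
  have hppos : 0 < perZ g z := perZ_pos S hz
  set p := perZ g z with hp
  set r := (-n) % (p:ℤ) with hr
  have hr0 : 0 ≤ r := Int.emod_nonneg _ (by positivity)
  have hrp : r < p := Int.emod_lt_of_pos _ (by positivity)
  refine ⟨r.toNat, by omega, ?_⟩
  rw [Int.toNat_of_nonneg hr0]
  have h1 : (g ^ r) (bZ g z) = (g ^ (-n)) (bZ g z) := by
    refine fix_congr (bZ_fix S hz) ?_
    rw [show r - (-n) = -((-n) - r) by ring]
    exact dvd_neg.mpr (Int.dvd_self_sub_of_emod_eq rfl)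
  rw [h1, ← hn, zpow_neg_cancel_apply]

lemma tZ_spec {z : ℝ} (hz : z ∈ O) : (g ^ (tZ g z : ℤ)) (bZ g z) = z := by
  obtain ⟨t, ht, hfix⟩ := tZ_exists S hz
  exact Nat.sInf_mem (⟨t, hfix⟩ : {t : ℕ | (g ^ (t:ℤ)) (bZ g z) = z}.Nonempty)

lemma tZ_lt {z : ℝ} (hz : z ∈ O) : tZ g z < perZ g z := by
  obtain ⟨t, ht, hfix⟩ := tZ_exists S hz
  exact lt_of_le_of_lt (Nat.sInf_le (show t ∈ {t : ℕ | (g ^ (t:ℤ)) (bZ g z) = z} from hfix)) ht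

end period

section hfun
variable {g : Equiv.Perm ℝ} {O : Set ℝ} (S : Setup g O)
include S

lemma tZ_shift {z : ℝ} (hz : z ∈ O) (n : ℤ) :
    (tZ g ((g ^ n) z) : ℤ) = ((tZ g z : ℤ) + n) % (perZ g z : ℤ) := by
  have hppos : 0 < perZ g z := perZ_pos S hz
  set p := (perZ g z : ℤ) with hp
  have hppos' : (0:ℤ) < p := by rw [hp]; exact_mod_cast hppos
  set t := (tZ g z : ℤ) with ht
  set b := bZ g z with hb
  set r := (t + n) % p with hr
  have hr0 : 0 ≤ r := Int.emod_nonneg _ (by omega)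
  have hrp : r < p := Int.emod_lt_of_pos _ hppos'
  have hbfix : (g ^ p) b = b := bZ_fix S hz
  have hbO : b ∈ O := bZ_mem S hz
  have hbz : (g ^ t) b = z := tZ_spec S hz
  have hrn : (g ^ r) b = (g ^ n) z := by
    have h1 : (g ^ r) b = (g ^ (n + t)) b := by
      refine fix_congr hbfix ?_
      rw [show r - (n + t) = -((t + n) - r) by ring]
      exact dvd_neg.mpr (Int.dvd_self_sub_of_emod_eq rfl)
    rw [h1, zpow_add_apply, hbz]
  have hperb : perZ g b = perZ g z := perZ_bZ S hz
  have hbz' : bZ g ((g ^ n) z) = b := bZ_zpow g z n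
  have hset : {s : ℕ | (g ^ (s:ℤ)) (bZ g ((g ^ n) z)) = (g ^ n) z}
      = {s : ℕ | (g ^ (s:ℤ)) b = (g ^ n) z} := by rw [hbz']
  have htval : tZ g ((g ^ n) z) = r.toNat := by
    unfold tZ
    rw [hset]
    refine le_antisymm (Nat.sInf_le ?_) (le_csInf ⟨r.toNat, ?_⟩ ?_)
    · show (g ^ ((r.toNat : ℕ):ℤ)) b = (g ^ n) z
      rw [Int.toNat_of_nonneg hr0]
      exact hrn
    · show (g ^ ((r.toNat : ℕ):ℤ)) b = (g ^ n) z
      rw [Int.toNat_of_nonneg hr0]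
      exact hrn
    · intro s hs
      by_contra hlt
      push_neg at hlt
      have hs' : (g ^ (s:ℤ)) b = (g ^ r) b := by
        rw [hs, hrn]
      have hfixrs : (g ^ (r - s)) b = b := by
        have h2 := congrArg (⇑(g ^ (-(s:ℤ)))) hs'
        rw [zpow_neg_cancel_apply, ← zpow_add_apply] at h2
        rw [show r - s = -(s:ℤ) + r by ring]
        exact h2.symm
      have hdvd := perZ_dvd S hbO hfixrs
      rw [hperb, ← hp] at hdvd
      have hle := Int.le_of_dvd (by omega) hdvd
      omega
  rw [htval, Int.toNat_of_nonneg hr0]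

lemma x_congr {x : ℝ} (hx : x ∈ Set.Ico (0:ℝ) 1) {A B : ℤ}
    (hd : (perZ g (lpt O x) : ℤ) ∣ A - B) : (g ^ A) x = (g ^ B) x := by
  have hzO : lpt O x ∈ O := (lpt_mem S.fin S.zero hx.1).1
  have h1 := off_zpow S hx A
  have h2 := off_zpow S hx B
  have h3 : (g ^ A) (lpt O x) = (g ^ B) (lpt O x) := fix_congr (perZ_fix S hzO) hd
  linarith

end hfun

noncomputable def hfun (g : Equiv.Perm ℝ) (O : Set ℝ) (x : ℝ) : ℝ :=
  if x ∈ Set.Ico (0:ℝ) 1 then (g ^ eZ g (lpt O x)) x else x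

section hfun2
variable {g : Equiv.Perm ℝ} {O : Set ℝ} (S : Setup g O)
include S

lemma hfun_zpow_arg {x : ℝ} (hx : x ∈ Set.Ico (0:ℝ) 1) (n : ℤ) :
    hfun g O ((g ^ n) x)
      = (g ^ ((perZ g (lpt O x) : ℤ) - 1
          - 2 * (((tZ g (lpt O x) : ℤ) + n) % (perZ g (lpt O x) : ℤ)))) ((g ^ n) x) := by
  have hmem := mapsTo_zpow S.fix hx n
  have hzO : lpt O x ∈ O := (lpt_mem S.fin S.zero hx.1).1
  rw [hfun, if_pos hmem, lpt_zpow S hx n]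
  congr 1
  unfold eZ
  rw [perZ_zpow, tZ_shift S hzO n]

lemma hfun_invol_Ico {x : ℝ} (hx : x ∈ Set.Ico (0:ℝ) 1) : hfun g O (hfun g O x) = x := by
  have hzO : lpt O x ∈ O := (lpt_mem S.fin S.zero hx.1).1
  set p := (perZ g (lpt O x) : ℤ) with hp
  set t := (tZ g (lpt O x) : ℤ) with ht
  have hppos : (0:ℤ) < p := by rw [hp]; exact_mod_cast perZ_pos S hzO
  have htlt : t < p := by rw [hp, ht]; exact_mod_cast tZ_lt S hzO
  have ht0 : 0 ≤ t := by positivity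
  set e := eZ g (lpt O x) with he
  have hee : e = p - 1 - 2 * t := rfl
  have h1 : hfun g O x = (g ^ e) x := by
    rw [hfun, if_pos hx]
  have h0 := hfun_zpow_arg S hx e
  rw [← h1, ← hp, ← ht] at h0
  have hmod : (t + e) % p = p - 1 - t := by
    rw [hee, show t + (p - 1 - 2 * t) = p - 1 - t by ring]
    exact Int.emod_eq_of_lt (by omega) (by omega)
  rw [h0, hmod, h1, ← zpow_add_apply,
    show p - 1 - 2 * (p - 1 - t) + e = 0 by rw [hee]; ring, zpow_zero]
  simp

lemma hfun_conj_Ico {x : ℝ} (hx : x ∈ Set.Ico (0:ℝ) 1) :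
    hfun g O (g (hfun g O x)) = g⁻¹ x := by
  have hzO : lpt O x ∈ O := (lpt_mem S.fin S.zero hx.1).1
  set p := (perZ g (lpt O x) : ℤ) with hp
  set t := (tZ g (lpt O x) : ℤ) with ht
  have hppos : (0:ℤ) < p := by rw [hp]; exact_mod_cast perZ_pos S hzO
  have htlt : t < p := by rw [hp, ht]; exact_mod_cast tZ_lt S hzO
  have ht0 : 0 ≤ t := by positivity
  set e := eZ g (lpt O x) with he
  have hee : e = p - 1 - 2 * t := rfl
  have h1 : hfun g O x = (g ^ e) x := by rw [hfun, if_pos hx]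
  have h2 : g (hfun g O x) = (g ^ (e + 1)) x := by
    rw [h1, add_comm, zpow_add_apply, zpow_one]
  have h0 := hfun_zpow_arg S hx (e + 1)
  rw [← h2, ← hp, ← ht] at h0
  rw [h0, h2, ← zpow_add_apply]
  have hinv : g⁻¹ x = (g ^ (-1 : ℤ)) x := by rw [zpow_neg_one]
  rw [hinv]
  by_cases htz : t = 0
  · have hmod : (t + (e + 1)) % p = 0 := by
      rw [hee, htz, show (0:ℤ) + (p - 1 - 2*0 + 1) = p by ring]
      simp
    rw [hmod]
    refine x_congr S hx ?_
    rw [← hp]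
    exact ⟨2, by rw [hee, htz]; ring⟩
  · have hmod : (t + (e + 1)) % p = p - t := by
      rw [hee, show t + (p - 1 - 2 * t + 1) = p - t by ring]
      exact Int.emod_eq_of_lt (by omega) (by omega)
    rw [hmod]
    refine x_congr S hx ?_
    rw [← hp]
    exact ⟨0, by rw [hee]; ring⟩

end hfun2


section assemble
variable {g : Equiv.Perm ℝ} {O : Set ℝ}

lemma hfun_invol (S : Setup g O) : Function.Involutive (hfun g O) := by
  intro x
  by_cases hx : x ∈ Set.Ico (0:ℝ) 1
  · exact hfun_invol_Ico S hx
  · have h1 : hfun g O x = x := by rw [hfun, if_neg hx]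
    rw [h1, h1]

noncomputable def hperm (S : Setup g O) : Equiv.Perm ℝ := (hfun_invol S).toPerm

lemma hperm_apply (S : Setup g O) (x : ℝ) : hperm S x = hfun g O x := rfl

lemma hperm_mul_self (S : Setup g O) : hperm S * hperm S = 1 := by
  ext x
  simp only [Equiv.Perm.mul_apply, hperm_apply, Equiv.Perm.one_apply]
  exact hfun_invol S x

lemma hperm_inv (S : Setup g O) : (hperm S)⁻¹ = hperm S :=
  inv_eq_of_mul_eq_one_right (hperm_mul_self S)

lemma hperm_conj (S : Setup g O) : hperm S * g * (hperm S)⁻¹ = g⁻¹ := by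
  rw [hperm_inv]
  ext x
  simp only [Equiv.Perm.mul_apply, hperm_apply]
  by_cases hx : x ∈ Set.Ico (0:ℝ) 1
  · exact hfun_conj_Ico S hx
  · have h1 : hfun g O x = x := by rw [hfun, if_neg hx]
    rw [h1, S.fix x hx, h1, fix_inv S.fix hx]

lemma hperm_isIET (S : Setup g O) : IsIET (hperm S) := by
  constructor
  · intro x hx
    rw [hperm_apply, hfun, if_neg hx]
  · -- breakpoints from O
    set F := S.fin.toFinset with hF
    have h0F : (0:ℝ) ∈ F := S.fin.mem_toFinset.mpr S.zero
    have h1F : (1:ℝ) ∈ F := S.fin.mem_toFinset.mpr S.one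
    have hcard2 : 2 ≤ F.card := by
      have : ({0, 1} : Finset ℝ) ⊆ F := by
        intro x hx
        simp only [Finset.mem_insert, Finset.mem_singleton] at hx
        rcases hx with rfl | rfl
        · exact h0F
        · exact h1F
      calc 2 = ({0, 1} : Finset ℝ).card := by simp
        _ ≤ F.card := Finset.card_le_card this
    set k := F.card - 2 with hk
    have hcard : F.card = k + 2 := by omega
    set iso := F.orderIsoOfFin hcard with hiso
    set a : Fin (k + 2) → ℝ := fun i => (iso i : ℝ) with ha
    have haF : ∀ i, a i ∈ F := fun i => (iso i).2
    have haO : ∀ i, a i ∈ O := fun i => S.fin.mem_toFinset.mp (haF i)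
    have hmono : StrictMono a := fun i j hij => Subtype.coe_lt_coe.mpr (iso.strictMono hij)
    have hsurj : ∀ o ∈ F, ∃ j, a j = o := by
      intro o ho
      exact ⟨iso.symm ⟨o, ho⟩, by simp [ha]⟩
    have ha0 : a 0 = 0 := by
      obtain ⟨j, hj⟩ := hsurj 0 h0F
      have h1 : a 0 ≤ a j := hmono.monotone (Fin.zero_le j)
      have h2 : 0 ≤ a 0 := (S.sub (haO 0)).1
      rw [hj] at h1
      linarith
    have halast : a (Fin.last (k + 1)) = 1 := by
      obtain ⟨j, hj⟩ := hsurj 1 h1F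
      have h1 : a j ≤ a (Fin.last (k + 1)) := hmono.monotone (Fin.le_last j)
      have h2 : a (Fin.last (k + 1)) ≤ 1 := (S.sub (haO _)).2
      rw [hj] at h1
      linarith
    refine ⟨k, a, ha0, halast, hmono, ?_⟩
    intro i
    refine ⟨(g ^ eZ g (a i.castSucc)) (a i.castSucc) - a i.castSucc, ?_⟩
    intro x hx
    have hx01 : x ∈ Set.Ico (0:ℝ) 1 := by
      constructor
      · rw [← ha0]
        exact le_trans (hmono.monotone (Fin.zero_le _)) hx.1
      · rw [← halast]
        exact lt_of_lt_of_le hx.2 (hmono.monotone (Fin.le_last _))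
    have hlx : lpt O x = a i.castSucc := by
      refine lpt_eq S.fin (haO _) hx.1 ?_
      intro o ho hox
      by_contra hlt
      push_neg at hlt
      obtain ⟨j, hj⟩ := hsurj o (S.fin.mem_toFinset.mpr ho)
      rw [← hj] at hlt hox
      have hij : i.castSucc < j := hmono.lt_iff_lt.mp hlt
      have hsucc : i.succ ≤ j := hij
      have : a i.succ ≤ a j := hmono.monotone hsucc
      have : a i.succ ≤ x := le_trans this hox
      exact absurd hx.2 (not_lt.mpr this)
    have hh : hperm S x = (g ^ eZ g (a i.castSucc)) x := by
      rw [hperm_apply, hfun, if_pos hx01, hlx]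
    have hoff := off_zpow S hx01 (eZ g (a i.castSucc))
    rw [hlx] at hoff
    rw [hh]
    linarith

theorem Setup.main (S : Setup g O) :
    ∃ h : Equiv.Perm ℝ, IsIET h ∧ h * h = 1 ∧ h * g * h⁻¹ = g⁻¹ :=
  ⟨hperm S, hperm_isIET S, hperm_mul_self S, hperm_conj S⟩

end assemble


lemma piece_find {m : ℕ} {a : Fin (m + 2) → ℝ} (ha0 : a 0 = 0)
    (halast : a (Fin.last (m + 1)) = 1) (hmono : StrictMono a)
    {x : ℝ} (hx : x ∈ Set.Ico (0:ℝ) 1) :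
    ∃ j : Fin (m + 1), a j.castSucc ≤ x ∧ x < a j.succ := by
  set T : Finset (Fin (m + 2)) := Finset.univ.filter (fun i => a i ≤ x) with hT
  have hne : T.Nonempty := ⟨0, by simp [hT, ha0, hx.1]⟩
  set j0 := T.max' hne with hj0
  have hj0mem : j0 ∈ T := T.max'_mem hne
  have hj0le : a j0 ≤ x := by
    have := hj0mem
    simp only [hT, Finset.mem_filter] at this
    exact this.2
  have hj0ne : j0 ≠ Fin.last (m + 1) := by
    intro hcon
    rw [hcon, halast] at hj0le
    linarith [hx.2]
  have hj0lt : (j0 : ℕ) < m + 1 := by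
    have h1 := j0.isLt
    have h2 : (j0 : ℕ) ≠ m + 1 := fun hc => hj0ne (Fin.ext hc)
    omega
  refine ⟨⟨(j0 : ℕ), hj0lt⟩, ?_, ?_⟩
  · have : Fin.castSucc ⟨(j0 : ℕ), hj0lt⟩ = j0 := by
      ext; simp
    rw [this]; exact hj0le
  · by_contra hc
    push_neg at hc
    have hmem : Fin.succ ⟨(j0 : ℕ), hj0lt⟩ ∈ T := by
      simp only [hT, Finset.mem_filter]
      exact ⟨Finset.mem_univ _, hc⟩
    have hle := T.le_max' _ hmem
    rw [← hj0] at hle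
    have : (j0 : ℕ) + 1 ≤ (j0 : ℕ) := by
      have := Fin.le_iff_val_le_val.mp hle
      simpa using this
    omega

theorem main_inst (g : Equiv.Perm ℝ) (hg : IsIET g) (hper : IsPeriodicPerm g) :
    ∃ h : Equiv.Perm ℝ, IsIET h ∧ h * h = 1 ∧ h * g * h⁻¹ = g⁻¹ := by
  obtain ⟨hfix, m, a, ha0, halast, hmono, hpieces⟩ := hg
  set O : Set ℝ := ⋃ i : Fin (m + 2), Set.range fun n : ℤ => (g ^ n) (a i) with hO
  have hfin : O.Finite := Set.finite_iUnion fun i => hper (a i)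
  have ha_mem : ∀ i, a i ∈ O := fun i =>
    Set.mem_iUnion.mpr ⟨i, ⟨0, by simp⟩⟩
  have haIcc : ∀ i, a i ∈ Set.Icc (0:ℝ) 1 := fun i =>
    ⟨ha0 ▸ hmono.monotone (Fin.zero_le i), halast ▸ hmono.monotone (Fin.le_last i)⟩
  have S : Setup g O := by
    refine ⟨hfin, ?_, ?_, ?_, ?_, ?_, hfix, ?_⟩
    · rw [← ha0]; exact ha_mem 0
    · rw [← halast]; exact ha_mem _
    · -- O ⊆ Icc 0 1
      rintro y hy
      obtain ⟨i, n, rfl⟩ := by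
        simpa only [hO, Set.mem_iUnion, Set.mem_range] using hy
      by_cases hi : a i ∈ Set.Ico (0:ℝ) 1
      · exact Set.Ico_subset_Icc_self (mapsTo_zpow hfix hi n)
      · rw [zpow_fix hfix hi n]; exact haIcc i
    · -- stab
      rintro y hy
      obtain ⟨i, n, rfl⟩ := by
        simpa only [hO, Set.mem_iUnion, Set.mem_range] using hy
      refine Set.mem_iUnion.mpr ⟨i, ⟨n + 1, ?_⟩⟩
      show (g ^ (n + 1)) (a i) = g ((g ^ n) (a i))
      rw [zpow_succ_apply]
    · -- stabInv
      rintro y hy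
      obtain ⟨i, n, rfl⟩ := by
        simpa only [hO, Set.mem_iUnion, Set.mem_range] using hy
      refine Set.mem_iUnion.mpr ⟨i, ⟨n - 1, ?_⟩⟩
      show (g ^ (n - 1)) (a i) = g⁻¹ ((g ^ n) (a i))
      rw [zpow_pred_apply]
    · -- loc
      intro x hx y hy hl
      have h0O : (0:ℝ) ∈ O := by rw [← ha0]; exact ha_mem 0
      obtain ⟨j, hj1, hj2⟩ := piece_find ha0 halast hmono hx
      have hjO : a j.castSucc ∈ O := ha_mem _
      have hlx1 : a j.castSucc ≤ lpt O x := le_lpt hfin hjO hj1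
      have hy1 : a j.castSucc ≤ y := by
        refine le_trans hlx1 ?_
        rw [hl]
        exact (lpt_mem hfin h0O hy.1).2
      have hy2 : y < a j.succ := by
        by_contra hc
        push_neg at hc
        have h1 : a j.succ ≤ lpt O y := le_lpt hfin (ha_mem _) hc
        rw [← hl] at h1
        have h2 : lpt O x ≤ x := (lpt_mem hfin h0O hx.1).2
        have h3 : a j.castSucc < a j.succ := hmono (Fin.castSucc_lt_succ (i := j))
        linarith [hj2]
      obtain ⟨c, hc⟩ := hpieces j
      rw [hc x ⟨hj1, hj2⟩, hc y ⟨hy1, hy2⟩]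
      ring
  exact S.main

end PIETAux


/-- Every periodic interval exchange transformation is strongly reversible in `𝒢`:
it is conjugate to its inverse by an involution of `𝒢`. -/
theorem periodic_IET_strongly_reversible (g : Equiv.Perm ℝ) (hg : IsIET g)
    (hper : IsPeriodicPerm g) :
    ∃ h : Equiv.Perm ℝ, IsIET h ∧ h * h = 1 ∧ h * g * h⁻¹ = g⁻¹ := by
  exact PIETAux.main_inst g hg hper
end

section
/- For all 0 ≤ a < b ≤ 1 and all α ∈ [0, b−a), the symmetry 𝓘_(a,b) (the class in 𝒢̄ of the map fixing every point outside (a,b) and sending x to a+b−x for x ∈ (a,b)) and the restricted rotation R_{α,[a,b)} (the map fixing every point outside [a,b) and sending x to a + ((x − a + α) mod (b − a)) for x ∈ [a,b)) are commutators in 𝒢̄: each equals [u,v] = u·v·u⁻¹·v⁻¹ for some u, v ∈ 𝒢̄. -/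
open scoped commutatorElement

/-!
Write `σ_t` for the product of the symmetries of `[a, a + t]` and `(a + t, b)`.
For `0 ≤ t < b - a` the composite `σ_t σ_0` is the restricted rotation by `t`; as `σ_t` and `σ_0`
are involutions, `⁅σ_t, σ_0⁆ = (σ_t σ_0)²` is the restricted rotation by `2t`, and `t = α / 2`
gives `R_{α,[a,b)}`.

For the symmetry `𝓘_(a,b) = σ_0`, cut `[a, b)` into quarters of length `h` and let `w` flip the
outer quarters and exchange the inner ones. Away from the quarter points, `w` conjugates `σ_{2h}`
to the exchange of the two halves, which is `σ_{2h} σ_0`; hence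
`⁅σ_{2h}, w⁆ = σ_{2h} (w σ_{2h} w) = σ_0`.
-/

open Function Set

def IsTranslationOrFlipOn (f : ℝ → ℝ) (s : Set ℝ) : Prop :=
  (∃ c, ∀ x ∈ s, f x = x + c) ∨ (∃ c, ∀ x ∈ s, f x = c - x)

namespace IsTranslationOrFlipOn

variable {f : ℝ → ℝ} {s t : Set ℝ}

lemma mono (h : IsTranslationOrFlipOn f t) (hst : s ⊆ t) : IsTranslationOrFlipOn f s :=
  h.imp (fun ⟨c, hc⟩ => ⟨c, fun x hx => hc x (hst hx)⟩)
    (fun ⟨c, hc⟩ => ⟨c, fun x hx => hc x (hst hx)⟩)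

lemma of_eqOn_id (h : ∀ x ∈ s, f x = x) : IsTranslationOrFlipOn f s :=
  .inl ⟨0, fun x hx => by rw [h x hx, add_zero]⟩

lemma of_isChain {u v : ℝ} : ∀ {x : ℝ} {l : List ℝ},
    (x :: l).IsChain (fun p q => p ≤ q ∧ IsTranslationOrFlipOn f (Ioo p q)) →
    x ≤ u → u < v → (∃ q ∈ x :: l, v ≤ q) → (∀ d ∈ x :: l, d ∉ Ioo u v) →
    IsTranslationOrFlipOn f (Ioo u v)
  | x, [], _, hxu, huv, ⟨q, hq, hvq⟩, _ => by
    rw [List.mem_singleton] at hq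
    linarith
  | x, y :: l, hchain, hxu, huv, ⟨q, hq, hvq⟩, hgap => by
    rw [List.isChain_cons_cons] at hchain
    obtain ⟨⟨-, hxy⟩, hchain⟩ := hchain
    by_cases hvy : v ≤ y
    · exact hxy.mono (Ioo_subset_Ioo hxu hvy)
    have hyu : y ≤ u := by
      by_contra hyu
      exact hgap y (by simp) ⟨by linarith, by linarith⟩
    refine of_isChain hchain hyu huv ⟨q, ?_, hvq⟩ fun d hd => hgap d (List.mem_cons_of_mem _ hd)
    rcases List.mem_cons.1 hq with rfl | hq
    · linarith
    · exact hq

end IsTranslationOrFlipOn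

lemma isFIET_of_finset (f : Equiv.Perm ℝ) (hf : ∀ x ∉ Ico (0 : ℝ) 1, f x = x)
    (D : Finset ℝ) (h0 : (0 : ℝ) ∈ D) (h1 : (1 : ℝ) ∈ D) (hD : ∀ d ∈ D, d ∈ Icc (0 : ℝ) 1)
    (hpiece : ∀ u ∈ D, ∀ v ∈ D, u < v → (∀ d ∈ D, d ∉ Ioo u v) →
      IsTranslationOrFlipOn f (Ioo u v)) :
    IsFIET f := by
  refine ⟨hf, ?_⟩
  obtain ⟨m, hm⟩ : ∃ m, D.card = m + 2 :=
    ⟨D.card - 2, by have := Finset.one_lt_card.2 ⟨0, h0, 1, h1, zero_ne_one⟩; omega⟩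
  set e := D.orderIsoOfFin hm
  refine ⟨m, fun i => (e i : ℝ), ?_, ?_, fun i j hij => e.strictMono hij, fun i => ?_⟩
  · refine le_antisymm ?_ (hD _ (e 0).2).1
    simpa using Subtype.coe_le_coe.2 (e.monotone (Fin.zero_le (e.symm ⟨0, h0⟩)))
  · refine le_antisymm (hD _ (e (Fin.last _)).2).2 ?_
    simpa using Subtype.coe_le_coe.2 (e.monotone (Fin.le_last (e.symm ⟨1, h1⟩)))
  refine hpiece _ (e _).2 _ (e _).2 (e.strictMono Fin.castSucc_lt_succ) fun d hd hmem => ?_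
  have hlo : i.castSucc < e.symm ⟨d, hd⟩ := e.lt_symm_apply.2 hmem.1
  have hhi : e.symm ⟨d, hd⟩ < i.succ := e.symm_apply_lt.2 hmem.2
  rw [Fin.lt_def] at hlo hhi
  simp only [Fin.val_castSucc, Fin.val_succ] at hlo hhi
  omega

lemma isFIET_of_isChain (f : Equiv.Perm ℝ) (hf : ∀ x ∉ Ico (0 : ℝ) 1, f x = x) (l : List ℝ)
    (hl : (0 :: l ++ [1]).IsChain (fun p q => p ≤ q ∧ IsTranslationOrFlipOn f (Ioo p q))) :
    IsFIET f := by
  have hsorted : (0 :: l ++ [1]).Pairwise (· ≤ ·) :=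
    List.isChain_iff_pairwise.1 (hl.imp fun _ _ h => h.1)
  simp only [List.cons_append, List.pairwise_cons, List.pairwise_append, List.mem_append,
    List.mem_singleton] at hsorted
  have hbounds : ∀ d ∈ 0 :: l ++ [1], d ∈ Icc (0 : ℝ) 1 := by
    intro d hd
    simp only [List.cons_append, List.mem_cons, List.mem_append, List.not_mem_nil, or_false] at hd
    rcases hd with rfl | hd | rfl
    · exact ⟨le_rfl, zero_le_one⟩
    · exact ⟨hsorted.1 d (.inl hd), hsorted.2.2.2 d hd 1 rfl⟩
    · exact ⟨zero_le_one, le_rfl⟩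
  refine isFIET_of_finset f hf (0 :: l ++ [1]).toFinset (by simp) (by simp)
    (fun d hd => hbounds d (List.mem_toFinset.1 hd)) fun u hu v hv huv hgap => ?_
  rw [List.mem_toFinset] at hu hv
  exact .of_isChain hl (hbounds u hu).1 huv ⟨v, hv, le_rfl⟩
    fun d hd => hgap d (List.mem_toFinset.2 hd)

noncomputable def twoFlips (a b t : ℝ) (x : ℝ) : ℝ :=
  if x ∈ Icc a (a + t) then 2 * a + t - x
  else if x ∈ Ioo (a + t) b then a + t + b - x
  else x

section twoFlips

variable {a b t x : ℝ}

lemma twoFlips_of_mem_Icc (hx : x ∈ Icc a (a + t)) : twoFlips a b t x = 2 * a + t - x :=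
  if_pos hx

lemma twoFlips_of_mem_Ioo (hx : x ∈ Ioo (a + t) b) : twoFlips a b t x = a + t + b - x := by
  rw [twoFlips, if_neg fun h => hx.1.not_ge h.2, if_pos hx]

lemma twoFlips_of_notMem (h₁ : x ∉ Icc a (a + t)) (h₂ : x ∉ Ioo (a + t) b) :
    twoFlips a b t x = x := by
  rw [twoFlips, if_neg h₁, if_neg h₂]

lemma twoFlips_of_notMem_Ico (ht : 0 ≤ t) (htb : a + t < b) (hx : x ∉ Ico a b) :
    twoFlips a b t x = x := by
  rw [mem_Ico, not_and_or, not_le, not_lt] at hx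
  refine twoFlips_of_notMem (fun h => ?_) fun h => ?_ <;>
    rcases hx with hx | hx <;> linarith [h.1, h.2]

lemma involutive_twoFlips (a b t : ℝ) : Involutive (twoFlips a b t) := by
  intro x
  by_cases h₁ : x ∈ Icc a (a + t)
  · rw [twoFlips_of_mem_Icc h₁, twoFlips_of_mem_Icc ⟨by linarith [h₁.2], by linarith [h₁.1]⟩]
    ring
  by_cases h₂ : x ∈ Ioo (a + t) b
  · rw [twoFlips_of_mem_Ioo h₂, twoFlips_of_mem_Ioo ⟨by linarith [h₂.2], by linarith [h₂.1]⟩]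
    ring
  rw [twoFlips_of_notMem h₁ h₂, twoFlips_of_notMem h₁ h₂]

lemma isFIET_twoFlips (h0a : 0 ≤ a) (ht : 0 ≤ t) (htb : a + t < b) (hb1 : b ≤ 1) :
    IsFIET (involutive_twoFlips a b t).toPerm := by
  refine isFIET_of_isChain _ (fun x hx => twoFlips_of_notMem_Ico ht htb fun h => ?_) [a, a + t, b]
    ?_
  · exact hx ⟨h0a.trans h.1, h.2.trans_le hb1⟩
  simp only [List.cons_append, List.nil_append, List.isChain_cons_cons, List.isChain_singleton,
    and_true, Involutive.coe_toPerm]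
  refine ⟨⟨h0a, .of_eqOn_id fun x hx => twoFlips_of_notMem_Ico ht htb fun h => hx.2.not_ge h.1⟩,
    ⟨by linarith, .inr ⟨2 * a + t, fun x hx => twoFlips_of_mem_Icc (Ioo_subset_Icc_self hx)⟩⟩,
    ⟨htb.le, .inr ⟨a + t + b, fun x hx => twoFlips_of_mem_Ioo hx⟩⟩,
    ⟨hb1, .of_eqOn_id fun x hx => twoFlips_of_notMem_Ico ht htb fun h => hx.1.not_ge h.2.le⟩⟩

end twoFlips

noncomputable def quarterExchange (a h : ℝ) (x : ℝ) : ℝ :=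
  if x ∈ Ioo a (a + h) then 2 * a + h - x
  else if x ∈ Ico (a + h) (a + 2 * h) then x + h
  else if x ∈ Ico (a + 2 * h) (a + 3 * h) then x - h
  else if x ∈ Ioo (a + 3 * h) (a + 4 * h) then 2 * a + 7 * h - x
  else x

section quarterExchange

variable {a h x : ℝ}

lemma quarterExchange_of_mem_first (hx : x ∈ Ioo a (a + h)) :
    quarterExchange a h x = 2 * a + h - x :=
  if_pos hx

lemma quarterExchange_of_mem_second (hx : x ∈ Ico (a + h) (a + 2 * h)) :
    quarterExchange a h x = x + h := by
  rw [quarterExchange, if_neg fun h' => h'.2.not_ge hx.1, if_pos hx]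

lemma quarterExchange_of_mem_third (hx : x ∈ Ico (a + 2 * h) (a + 3 * h)) :
    quarterExchange a h x = x - h := by
  obtain ⟨hx₁, hx₂⟩ := hx
  rw [quarterExchange, if_neg fun h' => by linarith [h'.2], if_neg fun h' => by linarith [h'.2],
    if_pos ⟨hx₁, hx₂⟩]

lemma quarterExchange_of_mem_fourth (hx : x ∈ Ioo (a + 3 * h) (a + 4 * h)) :
    quarterExchange a h x = 2 * a + 7 * h - x := by
  obtain ⟨hx₁, hx₂⟩ := hx
  rw [quarterExchange, if_neg fun h' => by linarith [h'.2], if_neg fun h' => by linarith [h'.2],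
    if_neg fun h' => by linarith [h'.2], if_pos ⟨hx₁, hx₂⟩]

lemma quarterExchange_of_notMem (h₁ : x ∉ Ioo a (a + h)) (h₂ : x ∉ Ico (a + h) (a + 2 * h))
    (h₃ : x ∉ Ico (a + 2 * h) (a + 3 * h)) (h₄ : x ∉ Ioo (a + 3 * h) (a + 4 * h)) :
    quarterExchange a h x = x := by
  rw [quarterExchange, if_neg h₁, if_neg h₂, if_neg h₃, if_neg h₄]

lemma quarterExchange_of_notMem_Ioo (hx : x ∉ Ioo a (a + 4 * h)) : quarterExchange a h x = x := by
  rw [mem_Ioo, not_and_or, not_lt, not_lt] at hx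
  refine quarterExchange_of_notMem ?_ ?_ ?_ ?_ <;> intro h' <;>
    rcases hx with hx | hx <;> linarith [h'.1, h'.2]

lemma involutive_quarterExchange (a h : ℝ) : Involutive (quarterExchange a h) := by
  intro x
  by_cases h₁ : x ∈ Ioo a (a + h)
  · rw [quarterExchange_of_mem_first h₁,
      quarterExchange_of_mem_first ⟨by linarith [h₁.2], by linarith [h₁.1]⟩]
    ring
  by_cases h₂ : x ∈ Ico (a + h) (a + 2 * h)
  · rw [quarterExchange_of_mem_second h₂,
      quarterExchange_of_mem_third ⟨by linarith [h₂.1], by linarith [h₂.2]⟩]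
    ring
  by_cases h₃ : x ∈ Ico (a + 2 * h) (a + 3 * h)
  · rw [quarterExchange_of_mem_third h₃,
      quarterExchange_of_mem_second ⟨by linarith [h₃.1], by linarith [h₃.2]⟩]
    ring
  by_cases h₄ : x ∈ Ioo (a + 3 * h) (a + 4 * h)
  · rw [quarterExchange_of_mem_fourth h₄,
      quarterExchange_of_mem_fourth ⟨by linarith [h₄.2], by linarith [h₄.1]⟩]
    ring
  rw [quarterExchange_of_notMem h₁ h₂ h₃ h₄, quarterExchange_of_notMem h₁ h₂ h₃ h₄]

lemma isFIET_quarterExchange (h0a : 0 ≤ a) (hh : 0 ≤ h) (h1 : a + 4 * h ≤ 1) :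
    IsFIET (involutive_quarterExchange a h).toPerm := by
  refine isFIET_of_isChain _ (fun x hx => quarterExchange_of_notMem_Ioo fun h' => ?_)
    [a, a + h, a + 2 * h, a + 3 * h, a + 4 * h] ?_
  · exact hx ⟨h0a.trans h'.1.le, h'.2.trans_le h1⟩
  simp only [List.cons_append, List.nil_append, List.isChain_cons_cons, List.isChain_singleton,
    and_true, Involutive.coe_toPerm]
  refine ⟨⟨h0a, .of_eqOn_id fun x hx => quarterExchange_of_notMem_Ioo fun h' => hx.2.not_gt h'.1⟩,
    ⟨by linarith, .inr ⟨2 * a + h, fun x hx => quarterExchange_of_mem_first hx⟩⟩,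
    ⟨by linarith, .inl ⟨h, fun x hx => quarterExchange_of_mem_second (Ioo_subset_Ico_self hx)⟩⟩,
    ⟨by linarith, .inl ⟨-h, fun x hx => by
      rw [quarterExchange_of_mem_third (Ioo_subset_Ico_self hx), sub_eq_add_neg]⟩⟩,
    ⟨by linarith, .inr ⟨2 * a + 7 * h, fun x hx => quarterExchange_of_mem_fourth hx⟩⟩,
    ⟨h1, .of_eqOn_id fun x hx => quarterExchange_of_notMem_Ioo fun h' => hx.1.not_gt h'.2⟩⟩

end quarterExchange

/-- The right-hand side is the exchange of the two halves of `[a, a + 4h)`. -/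
lemma quarterExchange_twoFlips_quarterExchange {a h x : ℝ} (hh : 0 < h)
    (hx : x ∉ ({a, a + h, a + 2 * h, a + 3 * h} : Set ℝ)) :
    quarterExchange a h (twoFlips a (a + 4 * h) (2 * h) (quarterExchange a h x)) =
      twoFlips a (a + 4 * h) (2 * h) (twoFlips a (a + 4 * h) 0 x) := by
  simp only [mem_insert_iff, mem_singleton_iff, not_or] at hx
  obtain ⟨hx₀, hx₁, hx₂, hx₃⟩ := hx
  by_cases hin : x ∈ Ioo a (a + 4 * h)
  swap
  · have hout : x ∉ Ico a (a + 4 * h) := fun h' => hin ⟨lt_of_le_of_ne h'.1 (Ne.symm hx₀), h'.2⟩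
    rw [quarterExchange_of_notMem_Ioo hin, twoFlips_of_notMem_Ico (by linarith) (by linarith) hout,
      quarterExchange_of_notMem_Ioo hin, twoFlips_of_notMem_Ico le_rfl (by linarith) hout,
      twoFlips_of_notMem_Ico (by linarith) (by linarith) hout]
  obtain ⟨ha, hb⟩ := hin
  rw [twoFlips_of_mem_Ioo ⟨by linarith, hb⟩]
  rcases lt_or_gt_of_ne hx₂ with hx₂ | hx₂
  · rcases lt_or_gt_of_ne hx₁ with hx₁ | hx₁
    · rw [quarterExchange_of_mem_first ⟨ha, hx₁⟩, twoFlips_of_mem_Icc ⟨by linarith, by linarith⟩,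
        quarterExchange_of_mem_second ⟨by linarith, by linarith⟩,
        twoFlips_of_mem_Ioo ⟨by linarith, by linarith⟩]
      ring
    · rw [quarterExchange_of_mem_second ⟨hx₁.le, hx₂⟩,
        twoFlips_of_mem_Ioo ⟨by linarith, by linarith⟩,
        quarterExchange_of_mem_fourth ⟨by linarith, by linarith⟩,
        twoFlips_of_mem_Ioo ⟨by linarith, by linarith⟩]
      ring
  · rcases lt_or_gt_of_ne hx₃ with hx₃ | hx₃
    · rw [quarterExchange_of_mem_third ⟨hx₂.le, hx₃⟩,
        twoFlips_of_mem_Icc ⟨by linarith, by linarith⟩,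
        quarterExchange_of_mem_first ⟨by linarith, by linarith⟩,
        twoFlips_of_mem_Icc ⟨by linarith, by linarith⟩]
      ring
    · rw [quarterExchange_of_mem_fourth ⟨hx₃, hb⟩, twoFlips_of_mem_Ioo ⟨by linarith, by linarith⟩,
        quarterExchange_of_mem_third ⟨by linarith, by linarith⟩,
        twoFlips_of_mem_Icc ⟨by linarith, by linarith⟩]
      ring

noncomputable def restrictedRotation (a b α : ℝ) (x : ℝ) : ℝ :=
  if x ∈ Ico a b then x + α - (b - a) * (⌊(x - a + α) / (b - a)⌋ : ℝ) else x

section restrictedRotation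

variable {a b α β x : ℝ}

lemma restrictedRotation_of_notMem (hx : x ∉ Ico a b) : restrictedRotation a b α x = x :=
  if_neg hx

lemma restrictedRotation_of_mem (hx : x ∈ Ico a b) :
    restrictedRotation a b α x = x + α - (b - a) * (⌊(x - a + α) / (b - a)⌋ : ℝ) :=
  if_pos hx

lemma restrictedRotation_eq_add (hα : 0 ≤ α) (ha : a ≤ x) (hb : x + α < b) :
    restrictedRotation a b α x = x + α := by
  have hfloor : ⌊(x - a + α) / (b - a)⌋ = 0 :=
    Int.floor_eq_zero_iff.2 ⟨by apply div_nonneg <;> linarith, by rw [div_lt_one] <;> linarith⟩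
  rw [restrictedRotation_of_mem ⟨ha, by linarith⟩, hfloor, Int.cast_zero, mul_zero, sub_zero]

lemma restrictedRotation_eq_add_sub (hα : α < b - a) (hx : x ∈ Ico a b) (hb : b ≤ x + α) :
    restrictedRotation a b α x = x + α - (b - a) := by
  have hL : 0 < b - a := by linarith [hx.1, hx.2]
  have hfloor : ⌊(x - a + α) / (b - a)⌋ = 1 := by
    rw [Int.floor_eq_iff, Int.cast_one, le_div_iff₀ hL, div_lt_iff₀ hL]
    constructor <;> linarith [hx.2]
  rw [restrictedRotation_of_mem hx, hfloor, Int.cast_one, mul_one]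

lemma restrictedRotation_sub_eq_mul_fract (hab : a < b) (hx : x ∈ Ico a b) :
    restrictedRotation a b α x - a = (b - a) * Int.fract ((x - a + α) / (b - a)) := by
  rw [restrictedRotation_of_mem hx, Int.fract, mul_sub, mul_div_cancel₀ _ (sub_ne_zero.2 hab.ne')]
  ring

lemma restrictedRotation_mem_Ico (hab : a < b) (hx : x ∈ Ico a b) :
    restrictedRotation a b α x ∈ Ico a b := by
  have h := restrictedRotation_sub_eq_mul_fract (α := α) hab hx
  have hL : 0 < b - a := sub_pos.2 hab
  have h₀ := mul_nonneg hL.le (Int.fract_nonneg ((x - a + α) / (b - a)))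
  have h₁ := mul_lt_of_lt_one_right hL (Int.fract_lt_one ((x - a + α) / (b - a)))
  constructor <;> linarith

lemma restrictedRotation_restrictedRotation (hab : a < b) (x : ℝ) :
    restrictedRotation a b β (restrictedRotation a b α x) = restrictedRotation a b (α + β) x := by
  by_cases hx : x ∈ Ico a b
  swap
  · rw [restrictedRotation_of_notMem hx, restrictedRotation_of_notMem hx,
      restrictedRotation_of_notMem hx]
  have hL : b - a ≠ 0 := sub_ne_zero.2 hab.ne'
  have hshift : (restrictedRotation a b α x - a + β) / (b - a) =
      (x - a + (α + β)) / (b - a) - (⌊(x - a + α) / (b - a)⌋ : ℝ) := by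
    rw [restrictedRotation_of_mem hx]
    field_simp
    ring
  rw [restrictedRotation_of_mem (restrictedRotation_mem_Ico hab hx), hshift, Int.floor_sub_intCast,
    restrictedRotation_of_mem hx, restrictedRotation_of_mem hx]
  push_cast
  ring

end restrictedRotation

lemma twoFlips_twoFlips_zero {a b t : ℝ} (ht : 0 ≤ t) (htb : t < b - a) (x : ℝ) :
    twoFlips a b t (twoFlips a b 0 x) = restrictedRotation a b t x := by
  by_cases hx : x ∈ Ico a b
  swap
  · rw [twoFlips_of_notMem_Ico le_rfl (by linarith) hx, twoFlips_of_notMem_Ico ht (by linarith) hx,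
      restrictedRotation_of_notMem hx]
  obtain ⟨ha, hb⟩ := hx
  rcases ha.eq_or_lt with rfl | ha
  · rw [twoFlips_of_mem_Icc (t := 0) (by simp), twoFlips_of_mem_Icc ⟨by linarith, by linarith⟩,
      restrictedRotation_eq_add ht le_rfl (by linarith)]
    ring
  rw [twoFlips_of_mem_Ioo ⟨by linarith, hb⟩]
  rcases lt_or_ge (x + t) b with hxt | hxt
  · rw [twoFlips_of_mem_Ioo ⟨by linarith, by linarith⟩, restrictedRotation_eq_add ht ha.le hxt]
    ring
  · rw [twoFlips_of_mem_Icc ⟨by linarith, by linarith⟩,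
      restrictedRotation_eq_add_sub htb ⟨ha.le, hb⟩ hxt]
    ring

lemma eq_twoFlips_zero {a b : ℝ} {S : ℝ → ℝ} (hS : ∀ x ∈ Ioo a b, S x = a + b - x)
    (hS' : ∀ x ∉ Ioo a b, S x = x) (x : ℝ) : S x = twoFlips a b 0 x := by
  by_cases hx : x ∈ Ioo a b
  · rw [hS x hx, twoFlips_of_mem_Ioo (by rwa [add_zero])]
    ring
  rw [hS' x hx]
  by_cases hxa : x = a
  · rw [twoFlips_of_mem_Icc (by simp [hxa]), hxa]
    ring
  refine (twoFlips_of_notMem (fun h => hxa ?_) (by rwa [add_zero])).symm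
  rw [add_zero] at h
  exact le_antisymm h.2 h.1

lemma commutatorElement_toPerm_apply {α : Type*} {f g : α → α} (hf : Involutive f)
    (hg : Involutive g) (x : α) : ⁅hf.toPerm, hg.toPerm⁆ x = f (g (f (g x))) :=
  rfl

lemma fEq_of_forall_notMem {f g : Equiv.Perm ℝ} {s : Set ℝ} (hs : s.Finite)
    (h : ∀ x ∉ s, f x = g x) : FEq f g :=
  hs.subset fun x hx => by_contra fun hxs => hx (h x hxs)

/-- The symmetry `𝓘_(a,b)` and the restricted rotation `R_{α,[a,b)}` are commutators
in `𝒢̄`. -/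
theorem symmetry_and_restricted_rotation_are_commutators
    (a b : ℝ) (h0a : 0 ≤ a) (hab : a < b) (hb1 : b ≤ 1)
    (α : ℝ) (hα : α ∈ Set.Ico (0 : ℝ) (b - a)) :
    (∀ S : Equiv.Perm ℝ,
      (∀ x ∈ Set.Ioo a b, S x = a + b - x) → (∀ x : ℝ, x ∉ Set.Ioo a b → S x = x) →
      ∃ u v : Equiv.Perm ℝ, IsFIET u ∧ IsFIET v ∧ FEq S ⁅u, v⁆) ∧
    (∀ R : Equiv.Perm ℝ,
      (∀ x ∈ Set.Ico a b, R x = x + α - (b - a) * (⌊(x - a + α) / (b - a)⌋ : ℝ)) →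
      (∀ x : ℝ, x ∉ Set.Ico a b → R x = x) →
      ∃ u v : Equiv.Perm ℝ, IsFIET u ∧ IsFIET v ∧ FEq R ⁅u, v⁆) := by
  obtain ⟨hα₀, hα⟩ := hα
  constructor
  · intro S hS hS'
    obtain ⟨h, hh, rfl⟩ : ∃ h, 0 < h ∧ b = a + 4 * h := ⟨(b - a) / 4, by linarith, by ring⟩
    refine ⟨(involutive_twoFlips a (a + 4 * h) (2 * h)).toPerm,
      (involutive_quarterExchange a h).toPerm, isFIET_twoFlips h0a (by linarith) (by linarith) hb1,
      isFIET_quarterExchange h0a hh.le hb1,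
      fEq_of_forall_notMem (toFinite {a, a + h, a + 2 * h, a + 3 * h}) fun x hx => ?_⟩
    rw [commutatorElement_toPerm_apply, quarterExchange_twoFlips_quarterExchange hh hx,
      involutive_twoFlips]
    exact eq_twoFlips_zero hS hS' x
  · intro R hR hR'
    refine ⟨(involutive_twoFlips a b (α / 2)).toPerm, (involutive_twoFlips a b 0).toPerm,
      isFIET_twoFlips h0a (by linarith) (by linarith) hb1,
      isFIET_twoFlips h0a le_rfl (by linarith) hb1,
      fEq_of_forall_notMem finite_empty fun x _ => ?_⟩
    rw [commutatorElement_toPerm_apply, twoFlips_twoFlips_zero (by linarith) (by linarith),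
      twoFlips_twoFlips_zero (by linarith) (by linarith), restrictedRotation_restrictedRotation hab,
      add_halves]
    by_cases hx : x ∈ Ico a b
    · rw [hR x hx, restrictedRotation_of_mem hx]
    · rw [hR' x hx, restrictedRotation_of_notMem hx]
end
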